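/- arXiv:0906.1168 — 12 statements merged into one kernel-verified Lean document; each statement's English description precedes it below -/
import Mathlib

section
/- Kirszbraun's extension theorem: Let m, n be natural numbers, let L ≥ 0 be a real number, let S be a subset of ℝᵐ, and let f : S → ℝⁿ be an L-Lipschitz map, i.e. ‖f x − f y‖ ≤ L·‖x − y‖ for all x, y ∈ S (Euclidean norms). Then there exists an L-Lipschitz map F : ℝᵐ → ℝⁿ such that F agrees with f on S. -/
/-! The heart of the matter is the finite case: if `‖q i - q j‖ ≤ ‖p i - p j‖` for finitely many
points, then for every `x` the balls `closedBall (q i) ‖x - p i‖` have a common point. Take `y`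
minimizing `μ(y) = max_i ‖y - q i‖² / ‖x - p i‖²`. First-order optimality (a separating hyperplane
would give a descent direction) puts `y` in the convex hull of the `q i` at which the maximum is
attained, say `y = ∑ w_i q_i`. Comparing the weighted variances
`∑ w_i w_j ‖q_i - q_j‖² = 2μ ∑ w_i ‖x - p_i‖²` and `∑ w_i w_j ‖p_i - p_j‖² ≤ 2 ∑ w_i ‖x - p_i‖²`
gives `μ ≤ 1`. Adding points one at a time extends a Lipschitz map from a finite set to any larger
finite set, and compactness of `∏_x closedBall (f a₀) (L ‖x - a₀‖)` (Tychonoff) passes from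
finite sets to the whole space. -/

open Finset Filter Topology
open scoped RealInnerProductSpace

variable {ι E G : Type*} [NormedAddCommGroup E] [InnerProductSpace ℝ E]
  [NormedAddCommGroup G] [InnerProductSpace ℝ G]

theorem sum_sum_mul_norm_sub_sq (s : Finset ι) {w : ι → ℝ} (hw : ∑ i ∈ s, w i = 1)
    (a : ι → G) :
    ∑ i ∈ s, ∑ j ∈ s, w i * w j * ‖a i - a j‖ ^ 2 =
      2 * ∑ i ∈ s, w i * ‖a i‖ ^ 2 - 2 * ‖∑ i ∈ s, w i • a i‖ ^ 2 := by
  have hsq : ‖∑ i ∈ s, w i • a i‖ ^ 2 = ∑ i ∈ s, ∑ j ∈ s, w i * w j * ⟪a i, a j⟫ := by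
    simp_rw [← real_inner_self_eq_norm_sq, sum_inner, inner_sum, real_inner_smul_left,
      real_inner_smul_right, mul_assoc]
  have hleft : ∑ i ∈ s, ∑ j ∈ s, w i * w j * ‖a i‖ ^ 2 = ∑ i ∈ s, w i * ‖a i‖ ^ 2 := by
    simp_rw [mul_right_comm (w _) (w _), ← mul_sum, hw, mul_one]
  have hright : ∑ i ∈ s, ∑ j ∈ s, w i * w j * ‖a j‖ ^ 2 = ∑ j ∈ s, w j * ‖a j‖ ^ 2 := by
    simp_rw [mul_assoc, ← mul_sum, ← sum_mul, hw, one_mul]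
  simp_rw [hsq, norm_sub_sq_real, mul_add, mul_sub, sum_add_distrib, sum_sub_distrib, hleft,
    hright, mul_left_comm _ (2 : ℝ), ← mul_sum]
  ring

theorem eventually_norm_add_smul_sub_sq_lt {y z v : G} (h : 0 < ⟪z - y, v⟫) :
    ∀ᶠ t in 𝓝[>] (0 : ℝ), ‖y + t • v - z‖ ^ 2 < ‖y - z‖ ^ 2 := by
  have hsmall : ∀ᶠ t in 𝓝[>] (0 : ℝ), t * ‖v‖ ^ 2 < 2 * ⟪z - y, v⟫ :=
    nhdsWithin_le_nhds <| ((continuous_id.mul continuous_const).tendsto' 0 0 (zero_mul _)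
      |>.eventually_lt_const (by positivity))
  filter_upwards [hsmall, self_mem_nhdsWithin] with t ht (htpos : 0 < t)
  have hexpand : ‖y + t • v - z‖ ^ 2 = ‖y - z‖ ^ 2 - t * (2 * ⟪z - y, v⟫ - t * ‖v‖ ^ 2) := by
    rw [add_sub_right_comm, norm_add_sq_real, inner_smul_right, norm_smul, mul_pow,
      Real.norm_eq_abs, sq_abs, ← neg_sub z y, inner_neg_left]
    ring
  rw [hexpand]
  nlinarith

/-- `hle` and `hmin` say that `y` minimizes `y ↦ max_i c i * ‖y - q i‖ ^ 2`, with minimum `μ`. -/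
theorem mem_convexHull_of_forall_exists_le [CompleteSpace G] [Finite ι] {q : ι → G}
    {c : ι → ℝ} (hc : ∀ i, 0 < c i) {y : G} {μ : ℝ} (hle : ∀ i, c i * ‖y - q i‖ ^ 2 ≤ μ)
    (hmin : ∀ y', ∃ i, μ ≤ c i * ‖y' - q i‖ ^ 2) :
    y ∈ convexHull ℝ (q '' {i | c i * ‖y - q i‖ ^ 2 = μ}) := by
  by_contra hy
  obtain ⟨f, u, hfy, hfq⟩ := geometric_hahn_banach_point_closed (convex_convexHull ℝ _)
    ((Set.toFinite _).isCompact_convexHull ℝ).isClosed hy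
  set v := (InnerProductSpace.toDual ℝ G).symm f
  have hdecrease : ∀ i, ∀ᶠ t in 𝓝[>] (0 : ℝ), c i * ‖y + t • v - q i‖ ^ 2 < μ := by
    intro i
    rcases (hle i).lt_or_eq with hlt | hactive
    · refine nhdsWithin_le_nhds (ContinuousAt.eventually_lt ?_ continuousAt_const ?_)
      · fun_prop
      · simpa using hlt
    · have hv : 0 < ⟪q i - y, v⟫ := by
        have := hfq (q i) (subset_convexHull ℝ _ ⟨i, hactive, rfl⟩)
        rw [real_inner_comm, InnerProductSpace.toDual_symm_apply, map_sub]
        linarith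
      filter_upwards [eventually_norm_add_smul_sub_sq_lt hv] with t ht
      exact hactive ▸ mul_lt_mul_of_pos_left ht (hc i)
  obtain ⟨t, ht⟩ := (eventually_all.2 hdecrease).exists
  obtain ⟨i, hi⟩ := hmin (y + t • v)
  exact (ht i).not_ge hi

theorem le_one_of_forall_norm_sum_smul_sub_sq_eq {s : Finset ι} {w : ι → ℝ}
    (hw₀ : ∀ i ∈ s, 0 ≤ w i) (hw₁ : ∑ i ∈ s, w i = 1) {p : ι → E} {q : ι → G}
    (hpq : ∀ i ∈ s, ∀ j ∈ s, ‖q i - q j‖ ≤ ‖p i - p j‖) {x : E} (hx : ∀ i ∈ s, x ≠ p i)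
    {μ : ℝ} (hμ : ∀ i ∈ s, ‖∑ j ∈ s, w j • q j - q i‖ ^ 2 = μ * ‖x - p i‖ ^ 2) : μ ≤ 1 := by
  set y := ∑ j ∈ s, w j • q j
  set R := ∑ i ∈ s, w i * ‖x - p i‖ ^ 2
  have hcenter : ∑ i ∈ s, w i • (q i - y) = 0 := by
    simp_rw [smul_sub]
    rw [sum_sub_distrib, ← sum_smul, hw₁, one_smul, sub_self]
  have hq : ∑ i ∈ s, ∑ j ∈ s, w i * w j * ‖q i - q j‖ ^ 2 = 2 * (μ * R) := by
    have hvar := sum_sum_mul_norm_sub_sq s hw₁ (fun i => q i - y)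
    simp_rw [sub_sub_sub_cancel_right] at hvar
    have hdist : ∑ i ∈ s, w i * ‖q i - y‖ ^ 2 = μ * R := by
      rw [mul_sum]
      exact sum_congr rfl fun i hi => by rw [norm_sub_rev, hμ i hi]; ring
    rw [hvar, hcenter, hdist, norm_zero]
    ring
  have hp : ∑ i ∈ s, ∑ j ∈ s, w i * w j * ‖p i - p j‖ ^ 2 ≤ 2 * R := by
    have hvar := sum_sum_mul_norm_sub_sq s hw₁ (fun i => p i - x)
    simp_rw [sub_sub_sub_cancel_right, norm_sub_rev (p _) x] at hvar
    rw [hvar]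
    exact sub_le_self _ (by positivity)
  have hmono : ∑ i ∈ s, ∑ j ∈ s, w i * w j * ‖q i - q j‖ ^ 2
      ≤ ∑ i ∈ s, ∑ j ∈ s, w i * w j * ‖p i - p j‖ ^ 2 :=
    sum_le_sum fun i hi => sum_le_sum fun j hj => mul_le_mul_of_nonneg_left
      (pow_le_pow_left₀ (norm_nonneg _) (hpq i hi j hj) 2) (mul_nonneg (hw₀ i hi) (hw₀ j hj))
  have hR : 0 < R := by
    obtain ⟨i, hi, hwi⟩ : ∃ i ∈ s, 0 < w i := exists_lt_of_sum_lt (by simp [hw₁])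
    refine sum_pos' (fun j hj => mul_nonneg (hw₀ j hj) (sq_nonneg _)) ⟨i, hi, ?_⟩
    exact mul_pos hwi (pow_pos (norm_pos_iff.2 (sub_ne_zero.2 (hx i hi))) 2)
  exact le_of_mul_le_mul_right (by linarith) hR

theorem exists_forall_norm_sub_le_of_norm_sub_le [FiniteDimensional ℝ G] [Finite ι]
    {p : ι → E} {q : ι → G} (hpq : ∀ i j, ‖q i - q j‖ ≤ ‖p i - p j‖) (x : E) :
    ∃ y, ∀ i, ‖y - q i‖ ≤ ‖x - p i‖ := by
  by_cases hxp : ∃ i, x = p i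
  · obtain ⟨i, rfl⟩ := hxp
    exact ⟨q i, hpq i⟩
  simp only [not_exists] at hxp
  cases isEmpty_or_nonempty ι
  · exact ⟨0, isEmptyElim⟩
  have := Fintype.ofFinite ι
  set r : ι → ℝ := fun i => ‖x - p i‖ ^ 2
  have hr : ∀ i, 0 < r i := fun i => pow_pos (norm_pos_iff.2 (sub_ne_zero.2 (hxp i))) 2
  set φ : G → ℝ := fun y => univ.sup' univ_nonempty fun i => (r i)⁻¹ * ‖y - q i‖ ^ 2
  have hφ : ∀ y i, (r i)⁻¹ * ‖y - q i‖ ^ 2 ≤ φ y := fun y i =>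
    le_sup' (fun i => (r i)⁻¹ * ‖y - q i‖ ^ 2) (mem_univ i)
  obtain ⟨y, hy⟩ : ∃ y, ∀ y', φ y ≤ φ y' := by
    refine Continuous.exists_forall_le (by fun_prop) ?_
    obtain ⟨i⟩ := ‹Nonempty ι›
    refine tendsto_atTop_mono (hφ · i) ?_
    simp_rw [← dist_eq_norm]
    exact ((tendsto_pow_atTop two_ne_zero).comp
      (tendsto_dist_right_cocompact_atTop (q i))).const_mul_atTop (inv_pos.2 (hr i))
  have hhull := mem_convexHull_of_forall_exists_le (fun i => inv_pos.2 (hr i)) (hφ y)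
    fun y' => by
      obtain ⟨i, -, hi⟩ := exists_mem_eq_sup' univ_nonempty fun i => (r i)⁻¹ * ‖y' - q i‖ ^ 2
      exact ⟨i, hi ▸ hy y'⟩
  rw [Set.image_eq_range, convexHull_range_eq_exists_affineCombination] at hhull
  obtain ⟨s, w, hw₀, hw₁, hyw⟩ := hhull
  rw [affineCombination_eq_linear_combination _ _ _ hw₁] at hyw
  have hμ : φ y ≤ 1 := by
    refine le_one_of_forall_norm_sum_smul_sub_sq_eq hw₀ hw₁ (fun i _ j _ => hpq i j)
      (fun i _ => hxp i) fun i _ => ?_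
    rw [hyw, mul_comm (φ y)]
    exact (inv_mul_eq_iff_eq_mul₀ (hr i).ne').1 i.2
  refine ⟨y, fun i => ?_⟩
  have hi : (r i)⁻¹ * ‖y - q i‖ ^ 2 ≤ 1 := (hφ y i).trans hμ
  rw [inv_mul_le_one₀ (hr i)] at hi
  exact (pow_le_pow_iff_left₀ (norm_nonneg _) (norm_nonneg _) two_ne_zero).1 hi

open Set Metric
open scoped NNReal

theorem LipschitzOnWith.exists_extend_insert [FiniteDimensional ℝ G] {K : ℝ≥0} {g : E → G}
    {s : Set E} (hg : LipschitzOnWith K g s) (hs : s.Finite) (x : E) :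
    ∃ g' : E → G, EqOn g' g s ∧ LipschitzOnWith K g' (insert x s) := by
  classical
  by_cases hx : x ∈ s
  · exact ⟨g, eqOn_refl g s, by rwa [insert_eq_of_mem hx]⟩
  have := hs.to_subtype
  obtain ⟨y, hy⟩ := exists_forall_norm_sub_le_of_norm_sub_le
    (p := fun a : s => (K : ℝ) • (a : E)) (q := fun a : s => g a)
    (fun a b => by rw [← smul_sub, norm_smul, NNReal.norm_eq]; exact hg.norm_sub_le a.2 b.2)
    ((K : ℝ) • x)
  have hy' : ∀ a ∈ s, ‖y - g a‖ ≤ K * ‖x - a‖ := fun a ha => by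
    simpa [← smul_sub, norm_smul] using hy ⟨a, ha⟩
  have hne : ∀ a ∈ s, a ≠ x := fun a ha => ne_of_mem_of_not_mem ha hx
  refine ⟨Function.update g x y, fun a ha => Function.update_of_ne (hne a ha) y g, ?_⟩
  rw [lipschitzOnWith_iff_norm_sub_le]
  rintro a (rfl | ha) b (rfl | hb)
  · simp
  · rw [Function.update_self, Function.update_of_ne (hne b hb)]
    exact hy' b hb
  · rw [Function.update_self, Function.update_of_ne (hne a ha), norm_sub_rev, norm_sub_rev a]
    exact hy' a ha
  · rw [Function.update_of_ne (hne a ha), Function.update_of_ne (hne b hb)]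
    exact hg.norm_sub_le ha hb

theorem LipschitzOnWith.exists_extend_union [FiniteDimensional ℝ G] {K : ℝ≥0} {g : E → G}
    {s t : Set E} (hg : LipschitzOnWith K g s) (hs : s.Finite) (ht : t.Finite) :
    ∃ g' : E → G, EqOn g' g s ∧ LipschitzOnWith K g' (s ∪ t) := by
  induction t, ht using Set.Finite.induction_on with
  | empty => exact ⟨g, eqOn_refl g s, by rwa [union_empty]⟩
  | @insert x t _ ht ih =>
    obtain ⟨g₁, hg₁s, hg₁⟩ := ih
    obtain ⟨g₂, hg₂g₁, hg₂⟩ := hg₁.exists_extend_insert (hs.union ht) x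
    exact ⟨g₂, (hg₂g₁.mono subset_union_left).trans hg₁s, by rwa [union_insert]⟩

theorem LipschitzOnWith.extend_of_forall_finset {α β : Type*} [PseudoMetricSpace α]
    [MetricSpace β] [ProperSpace β] {K : ℝ≥0} {f : α → β} {s : Set α} (hs : s.Nonempty)
    (h : ∀ t : Finset α, ∃ g : α → β, EqOn g f (t ∩ s) ∧ LipschitzOnWith K g t) :
    ∃ g : α → β, LipschitzWith K g ∧ EqOn f g s := by
  classical
  obtain ⟨a₀, ha₀⟩ := hs
  let B : Set (α → β) := univ.pi fun x => closedBall (f a₀) (K * dist x a₀)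
  let C : α × α → Set (α → β) := fun z =>
    {g | dist (g z.1) (g z.2) ≤ K * dist z.1 z.2 ∧ (z.1 ∈ s → g z.1 = f z.1)}
  have hB : IsCompact B := isCompact_univ_pi fun x => isCompact_closedBall _ _
  have hC : ∀ z, IsClosed (C z) := by
    rintro ⟨x, y⟩
    exact (isClosed_le ((continuous_apply x).dist (continuous_apply y)) continuous_const).inter
      (isClosed_imp isOpen_const (isClosed_eq (continuous_apply x) continuous_const))
  obtain ⟨g, -, hg⟩ := hB.inter_iInter_nonempty C hC fun u => by
    let t : Finset α := insert a₀ (u.image Prod.fst ∪ u.image Prod.snd)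
    obtain ⟨g, hgf, hg⟩ := h t
    have ha₀t : a₀ ∈ t := mem_insert_self a₀ _
    refine ⟨t.piecewise g fun _ => f a₀, fun x _ => ?_, mem_iInter₂.2 ?_⟩
    · by_cases hx : x ∈ t
      · rw [t.piecewise_eq_of_mem _ _ hx, mem_closedBall, ← hgf ⟨ha₀t, ha₀⟩]
        exact hg.dist_le_mul x hx a₀ ha₀t
      · rw [t.piecewise_eq_of_notMem _ _ hx, mem_closedBall, dist_self]
        positivity
    · rintro ⟨x, y⟩ hxy
      have hx : x ∈ t :=
        Finset.mem_insert_of_mem (Finset.mem_union_left _ (Finset.mem_image_of_mem _ hxy))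
      have hy : y ∈ t :=
        Finset.mem_insert_of_mem (Finset.mem_union_right _ (Finset.mem_image_of_mem _ hxy))
      refine ⟨?_, fun hxs => ?_⟩
      · rw [t.piecewise_eq_of_mem _ _ hx, t.piecewise_eq_of_mem _ _ hy]
        exact hg.dist_le_mul x hx y hy
      · rw [t.piecewise_eq_of_mem _ _ hx]
        exact hgf ⟨hx, hxs⟩
  rw [mem_iInter] at hg
  exact ⟨g, LipschitzWith.of_dist_le_mul fun x y => (hg (x, y)).1,
    fun x hx => ((hg (x, x)).2 hx).symm⟩

theorem LipschitzOnWith.extend_innerProductSpace [FiniteDimensional ℝ G] {K : ℝ≥0}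
    {f : E → G} {s : Set E} (hf : LipschitzOnWith K f s) :
    ∃ g : E → G, LipschitzWith K g ∧ EqOn f g s := by
  rcases s.eq_empty_or_nonempty with rfl | hs
  · exact ⟨0, LipschitzWith.const' 0, eqOn_empty _ _⟩
  refine extend_of_forall_finset hs fun t => ?_
  obtain ⟨g, hgf, hg⟩ := (hf.mono inter_subset_right).exists_extend_union
    (t.finite_toSet.inter_of_left s) t.finite_toSet
  exact ⟨g, hgf, by rwa [union_eq_right.2 inter_subset_left] at hg⟩

/-- Kirszbraun's extension theorem: every `L`-Lipschitz map `f : S → ℝⁿ`, `S ⊆ ℝᵐ`,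
extends to an `L`-Lipschitz map `F : ℝᵐ → ℝⁿ`. -/
theorem kirszbraun (m n : ℕ) (L : ℝ) (hL : 0 ≤ L)
    (S : Set (EuclideanSpace ℝ (Fin m)))
    (f : EuclideanSpace ℝ (Fin m) → EuclideanSpace ℝ (Fin n))
    (hf : ∀ x ∈ S, ∀ y ∈ S, ‖f x - f y‖ ≤ L * ‖x - y‖) :
    ∃ F : EuclideanSpace ℝ (Fin m) → EuclideanSpace ℝ (Fin n),
      (∀ x ∈ S, F x = f x) ∧ (∀ x y, ‖F x - F y‖ ≤ L * ‖x - y‖) := by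
  lift L to ℝ≥0 using hL
  obtain ⟨F, hF, hFf⟩ := (lipschitzOnWith_iff_norm_sub_le.2 hf).extend_innerProductSpace
  exact ⟨F, fun x hx => (hFf hx).symm, hF.norm_sub_le⟩
end

section
/- Strengthened Kirszbraun theorem with range constraint: Let m, n be natural numbers, let L ≥ 0 be a real number, let S be a nonempty subset of ℝᵐ, and let f : S → ℝⁿ be an L-Lipschitz map. Then there exists an L-Lipschitz map F : ℝᵐ → ℝⁿ such that F agrees with f on S and the range of F is contained in the closure of the convex hull of the image f(S). -/
/-!
Kirszbraun–Valentine argument. For finitely many constraints `‖y - zᵢ‖ ≤ L ‖x - aᵢ‖`, minimise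
over the closed convex target `C` the largest ratio `‖y - zᵢ‖ / (L ‖x - aᵢ‖)`. A minimiser `y`
lies in the convex hull of the active points `zᵢ`, since otherwise moving `y` towards that hull
lowers every active ratio. Writing `y = ∑ wᵢ zᵢ`, the variance identity
`∑ wᵢ ‖y - zᵢ‖² = ½ ∑ wᵢ wⱼ ‖zᵢ - zⱼ‖²` and the Lipschitz bound give
`∑ wᵢ ‖y - zᵢ‖² ≤ ∑ wᵢ L² ‖x - aᵢ‖²`, so some active ratio, hence the maximal one, is at most `1`.
Compactness of closed balls passes from finitely many constraints to arbitrarily many, and Zorn's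
lemma on Lipschitz relations with values in `C` yields the extension; here `C` is the closed
convex hull of `f '' S`.
-/

open Finset Filter Set Topology

section

variable {E F : Type*} [NormedAddCommGroup E] [NormedAddCommGroup F]

def LipschitzRel (L : ℝ) (P : Set (E × F)) : Prop :=
  ∀ p ∈ P, ∀ q ∈ P, ‖p.2 - q.2‖ ≤ L * ‖p.1 - q.1‖

theorem LipschitzRel.mono {L : ℝ} {P Q : Set (E × F)} (hQ : LipschitzRel L Q) (hPQ : P ⊆ Q) :
    LipschitzRel L P :=
  fun p hp q hq => hQ p (hPQ hp) q (hPQ hq)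

theorem LipschitzRel.insert_of_norm_sub_le {L : ℝ} {T : Set (E × F)} (hT : LipschitzRel L T)
    {x : E} {y : F} (hxy : ∀ q ∈ T, ‖y - q.2‖ ≤ L * ‖x - q.1‖) :
    LipschitzRel L (insert (x, y) T) := by
  rintro p (rfl | hp) q (rfl | hq)
  · simp only [sub_self, norm_zero, mul_zero, le_refl]
  · exact hxy q hq
  · rw [norm_sub_rev, norm_sub_rev p.1]
    exact hxy p hp
  · exact hT p hp q hq

theorem LipschitzRel.sUnion_of_isChain {L : ℝ} {c : Set (Set (E × F))}
    (hc : ∀ T ∈ c, LipschitzRel L T) (hchain : IsChain (· ⊆ ·) c) : LipschitzRel L (⋃₀ c) := by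
  rintro p ⟨T, hT, hp⟩ q ⟨U, hU, hq⟩
  rcases hchain.total hT hU with hTU | hUT
  · exact hc U hU p (hTU hp) q hq
  · exact hc T hT p hp q (hUT hq)

theorem exists_isMinOn_sup'_norm_sub_div [ProperSpace F] {ι : Type*} {s : Finset ι}
    (hs : s.Nonempty) (z : ι → F) {r : ι → ℝ} (hr : ∀ i ∈ s, 0 < r i) {C : Set F}
    (hCcl : IsClosed C) (hCne : C.Nonempty) :
    ∃ y ∈ C, IsMinOn (fun y => s.sup' hs fun i => ‖y - z i‖ / r i) C y := by
  obtain ⟨i, hi⟩ := id hs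
  obtain ⟨y₀, hy₀⟩ := hCne
  have hcont : Continuous fun y => s.sup' hs fun i => ‖y - z i‖ / r i :=
    Continuous.finset_sup'_apply hs fun i _ => by fun_prop
  refine hcont.continuousOn.exists_isMinOn' hCcl hy₀ (Eventually.filter_mono inf_le_left ?_)
  have htend : Tendsto (fun y => ‖y - z i‖ / r i) (cocompact F) atTop := by
    simpa only [dist_eq_norm] using
      (tendsto_dist_right_cocompact_atTop (z i)).atTop_div_const (hr i hi)
  exact (htend.eventually_ge_atTop _).mono fun y hy =>
    hy.trans (le_sup' (fun i => ‖y - z i‖ / r i) hi)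

variable [InnerProductSpace ℝ E] [InnerProductSpace ℝ F]

theorem sum_sum_mul_norm_sub_sq_s1 {κ : Type*} [Fintype κ] {w : κ → ℝ} (hw : ∑ j, w j = 1)
    (u : κ → F) :
    ∑ j, ∑ k, w j * w k * ‖u j - u k‖ ^ 2 =
      2 * ∑ j, w j * ‖u j‖ ^ 2 - 2 * ‖∑ j, w j • u j‖ ^ 2 := by
  have hsq : ‖∑ j, w j • u j‖ ^ 2 = ∑ j, ∑ k, w j * w k * inner ℝ (u j) (u k) := by
    simp only [← real_inner_self_eq_norm_sq, sum_inner, inner_sum, real_inner_smul_left,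
      real_inner_smul_right]
    exact sum_congr rfl fun j _ => sum_congr rfl fun k _ => by rw [real_inner_comm]; ring
  have hright : ∑ j, ∑ k, w j * w k * ‖u k‖ ^ 2 = ∑ k, w k * ‖u k‖ ^ 2 := by
    rw [sum_comm]; simp only [← sum_mul, hw, one_mul]
  simp only [hsq, norm_sub_sq_real, mul_sub, mul_add, sum_add_distrib, sum_sub_distrib,
    ← sum_mul, ← mul_sum, hw, mul_one, hright]
  have htwo : ∑ j, ∑ k, w j * w k * (2 * inner ℝ (u j) (u k)) =
      2 * ∑ j, ∑ k, w j * w k * inner ℝ (u j) (u k) := by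
    simp only [mul_sum]
    exact sum_congr rfl fun j _ => sum_congr rfl fun k _ => by ring
  linarith

theorem sum_mul_norm_sub_sq_le {κ : Type*} [Fintype κ] {w : κ → ℝ} (hw₀ : ∀ j, 0 ≤ w j)
    (hw : ∑ j, w j = 1) {v : κ → F} {b : κ → E} (hvb : ∀ j k, ‖v j - v k‖ ≤ ‖b j - b k‖)
    (x : E) :
    ∑ j, w j * ‖∑ k, w k • v k - v j‖ ^ 2 ≤ ∑ j, w j * ‖x - b j‖ ^ 2 := by
  set y := ∑ k, w k • v k
  have hy : ∑ j, w j • (y - v j) = 0 := by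
    simp [smul_sub, sum_sub_distrib, ← sum_smul, hw, y]
  have key := sum_sum_mul_norm_sub_sq_s1 hw (fun j => y - v j)
  have key' := sum_sum_mul_norm_sub_sq_s1 hw (fun j => x - b j)
  rw [hy, norm_zero] at key
  have hle : ∑ j, ∑ k, w j * w k * ‖(y - v j) - (y - v k)‖ ^ 2 ≤
      ∑ j, ∑ k, w j * w k * ‖(x - b j) - (x - b k)‖ ^ 2 := by
    gcongr with j _ k _
    · exact mul_nonneg (hw₀ j) (hw₀ k)
    · simpa only [sub_sub_sub_cancel_left] using hvb k j
  nlinarith [sq_nonneg ‖∑ j, w j • (x - b j)‖]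

theorem LipschitzRel.exists_norm_sub_le_of_mem_convexHull {L : ℝ} (hL : 0 ≤ L)
    {P : Set (E × F)} (hP : LipschitzRel L P) {y : F}
    (hy : y ∈ convexHull ℝ (Prod.snd '' P)) (x : E) :
    ∃ p ∈ P, ‖y - p.2‖ ≤ L * ‖x - p.1‖ := by
  obtain ⟨κ, _, w, v, hw₀, hw, hv, rfl⟩ := mem_convexHull_iff_exists_fintype.1 hy
  choose p hpP hpv using hv
  have hnorm (a b : E) : ‖L • a - L • b‖ = L * ‖a - b‖ := by
    rw [← smul_sub, norm_smul, Real.norm_of_nonneg hL]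
  have hvar := sum_mul_norm_sub_sq_le hw₀ hw (b := fun j => L • (p j).1)
    (fun j k => by simpa only [hnorm, hpv] using hP _ (hpP j) _ (hpP k)) (L • x)
  by_contra! hfar
  have hlt (k : κ) : ‖L • x - L • (p k).1‖ ^ 2 < ‖∑ k, w k • v k - v k‖ ^ 2 := by
    rw [hnorm, ← hpv k]
    exact pow_lt_pow_left₀ (hfar _ (hpP k)) (by positivity) two_ne_zero
  obtain ⟨j, -, hj⟩ : ∃ j ∈ Finset.univ, 0 < w j :=
    exists_lt_of_sum_lt (by simp [hw] : ∑ _j : κ, (0 : ℝ) < ∑ j, w j)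
  exact hvar.not_gt (sum_lt_sum (fun k _ => mul_le_mul_of_nonneg_left (hlt k).le (hw₀ k))
    ⟨j, Finset.mem_univ j, mul_lt_mul_of_pos_left (hlt j) hj⟩)

theorem exists_forall_norm_lineMap_sub_lt {K : Set F} (hK : Convex ℝ K) (hKc : IsComplete K)
    (hne : K.Nonempty) {y : F} (hy : y ∉ K) :
    ∃ p ∈ K, ∀ z ∈ K, ∀ t ∈ Ioc (0 : ℝ) 1, ‖AffineMap.lineMap y p t - z‖ < ‖y - z‖ := by
  obtain ⟨p, hpK, hp⟩ := exists_norm_eq_iInf_of_complete_convex hne hKc hK y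
  have hobtuse := (norm_eq_iInf_iff_real_inner_le_zero hK hpK).1 hp
  have hd : 0 < ‖p - y‖ := norm_pos_iff.2 (sub_ne_zero.2 fun h => hy (h ▸ hpK))
  refine ⟨p, hpK, fun z hz t ⟨ht₀, ht₁⟩ => ?_⟩
  have hinner : inner ℝ (y - z) (p - y) ≤ -‖p - y‖ ^ 2 := by
    have hzp : inner ℝ (z - p) (p - y) = -inner ℝ (y - p) (z - p) := by
      rw [← neg_sub y p, inner_neg_right, real_inner_comm]
    have hsplit : y - z = -(p - y) - (z - p) := by abel
    rw [hsplit, inner_sub_left, inner_neg_left, real_inner_self_eq_norm_sq, hzp]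
    linarith [hobtuse z hz]
  have hsq : ‖AffineMap.lineMap y p t - z‖ ^ 2 ≤ ‖y - z‖ ^ 2 - t * (2 - t) * ‖p - y‖ ^ 2 := by
    have hline : AffineMap.lineMap y p t - z = (y - z) + t • (p - y) := by
      rw [AffineMap.lineMap_apply_module']; abel
    rw [hline, norm_add_sq_real, norm_smul, real_inner_smul_right, Real.norm_of_nonneg ht₀.le]
    nlinarith
  refine lt_of_pow_lt_pow_left₀ 2 (norm_nonneg _) (hsq.trans_lt ?_)
  have : 0 < t * (2 - t) * ‖p - y‖ ^ 2 := by
    have : 0 < 2 - t := by linarith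
    positivity
  linarith

theorem mem_convexHull_of_isMinOn_sup' {ι : Type*} {s : Finset ι} (hs : s.Nonempty)
    {z : ι → F} {r : ι → ℝ} (hr : ∀ i ∈ s, 0 < r i) {C : Set F} (hC : Convex ℝ C)
    (hzC : ∀ i ∈ s, z i ∈ C) {y : F} (hyC : y ∈ C)
    (hmin : IsMinOn (fun y => s.sup' hs fun i => ‖y - z i‖ / r i) C y) :
    y ∈ convexHull ℝ
      (z '' {i ∈ s | ‖y - z i‖ / r i = s.sup' hs fun i => ‖y - z i‖ / r i}) := by
  set g : F → ℝ := fun y => s.sup' hs fun i => ‖y - z i‖ / r i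
  set I : Set ι := {i ∈ s | ‖y - z i‖ / r i = g y}
  by_contra hy
  have hIne : (z '' I).Nonempty := by
    obtain ⟨i, hi, hgi⟩ := s.exists_mem_eq_sup' hs fun i => ‖y - z i‖ / r i
    exact ⟨z i, i, ⟨hi, hgi.symm⟩, rfl⟩
  obtain ⟨p, hpK, hp⟩ := exists_forall_norm_lineMap_sub_lt (convex_convexHull ℝ _)
    (((s.finite_toSet.subset fun _ hi => hi.1).image z).isCompact_convexHull (𝕜 := ℝ)).isComplete
    (hIne.mono (subset_convexHull ℝ _)) hy
  have hpC : p ∈ C :=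
    convexHull_min (image_subset_iff.2 fun i hi => hzC i hi.1) hC hpK
  have hdescent : ∀ i ∈ s, ∀ᶠ t in 𝓝[>] (0 : ℝ), ‖AffineMap.lineMap y p t - z i‖ / r i < g y := by
    intro i hi
    by_cases hact : ‖y - z i‖ / r i = g y
    · filter_upwards [Ioc_mem_nhdsGT one_pos] with t ht
      rw [← hact]
      exact div_lt_div_of_pos_right (hp _ (subset_convexHull ℝ _
        ⟨i, ⟨hi, hact⟩, rfl⟩) t ht) (hr i hi)
    · have hlt : ‖y - z i‖ / r i < g y := (le_sup' (fun i => ‖y - z i‖ / r i) hi).lt_of_ne hact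
      refine nhdsWithin_le_nhds (ContinuousAt.eventually_lt ?_ continuousAt_const ?_)
      · exact ((AffineMap.lineMap_continuous.sub continuous_const).norm.div_const _).continuousAt
      · simpa only [AffineMap.lineMap_apply_zero] using hlt
  obtain ⟨t, hlt, ht⟩ :=
    (((eventually_all_finset s).2 hdescent).and (Ioc_mem_nhdsGT one_pos)).exists
  exact (hmin (hC.lineMap_mem hyC hpC (Ioc_subset_Icc_self ht))).not_gt
    ((sup'_lt_iff hs).2 hlt)

variable [ProperSpace F]

theorem LipschitzRel.exists_mem_forall_norm_sub_le_of_finset {L : ℝ} (hL : 0 ≤ L) {C : Set F}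
    (hC : Convex ℝ C) (hCcl : IsClosed C) {P : Finset (E × F)} (hPne : P.Nonempty)
    (hPC : ∀ p ∈ P, p.2 ∈ C) (hP : LipschitzRel L (P : Set (E × F))) (x : E) :
    ∃ y ∈ C, ∀ p ∈ P, ‖y - p.2‖ ≤ L * ‖x - p.1‖ := by
  by_cases hzero : ∃ q ∈ P, L * ‖x - q.1‖ = 0
  · obtain ⟨q, hq, hq0⟩ := hzero
    refine ⟨q.2, hPC q hq, fun p hp => (hP q hq p hp).trans ?_⟩
    calc L * ‖q.1 - p.1‖ ≤ L * (‖x - q.1‖ + ‖x - p.1‖) := by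
          gcongr; simpa only [dist_eq_norm] using dist_triangle_left q.1 p.1 x
      _ = L * ‖x - p.1‖ := by rw [mul_add, hq0, zero_add]
  push Not at hzero
  have hr : ∀ p ∈ P, 0 < L * ‖x - p.1‖ := fun p hp =>
    (mul_nonneg hL (norm_nonneg _)).lt_of_ne' (hzero p hp)
  obtain ⟨y, hyC, hmin⟩ := exists_isMinOn_sup'_norm_sub_div hPne Prod.snd hr hCcl
    ⟨_, hPC _ hPne.choose_spec⟩
  obtain ⟨q, ⟨hq, hqact⟩, hqy⟩ := (hP.mono fun _ hp => hp.1).exists_norm_sub_le_of_mem_convexHull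
    hL (mem_convexHull_of_isMinOn_sup' hPne hr hC hPC hyC hmin) x
  refine ⟨y, hyC, fun p hp => (div_le_one (hr p hp)).1 ?_⟩
  exact (le_sup' (fun p => ‖y - p.2‖ / (L * ‖x - p.1‖)) hp).trans
    (hqact ▸ (div_le_one (hr q hq)).2 hqy)

theorem LipschitzRel.exists_mem_forall_norm_sub_le {L : ℝ} (hL : 0 ≤ L) {C : Set F}
    (hC : Convex ℝ C) (hCcl : IsClosed C) {T : Set (E × F)} (hTne : T.Nonempty)
    (hTC : ∀ p ∈ T, p.2 ∈ C) (hT : LipschitzRel L T) (x : E) :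
    ∃ y ∈ C, ∀ q ∈ T, ‖y - q.2‖ ≤ L * ‖x - q.1‖ := by
  classical
  obtain ⟨q₀, hq₀⟩ := hTne
  let ball (q : E × F) : Set F := Metric.closedBall q.2 (L * ‖x - q.1‖)
  have hfin (u : Finset T) : ((C ∩ ball q₀) ∩ ⋂ q ∈ u, ball q).Nonempty := by
    let P : Finset (E × F) := insert q₀ (u.map (Function.Embedding.subtype _))
    have hPT : (P : Set (E × F)) ⊆ T := by
      simp only [P, Finset.coe_insert, Finset.coe_map, Set.insert_subset_iff]
      exact ⟨hq₀, by rintro _ ⟨q, -, rfl⟩; exact q.2⟩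
    obtain ⟨y, hyC, hy⟩ := (hT.mono hPT).exists_mem_forall_norm_sub_le_of_finset hL hC hCcl
      (Finset.insert_nonempty _ _) (fun p hp => hTC p (hPT hp)) x
    refine ⟨y, ⟨hyC, ?_⟩, mem_iInter₂.2 fun q hq => ?_⟩
    · simpa only [ball, Metric.mem_closedBall, dist_eq_norm] using hy q₀ (mem_insert_self _ _)
    · simpa only [ball, Metric.mem_closedBall, dist_eq_norm] using
        hy q (mem_insert_of_mem (mem_map_of_mem _ hq))
  obtain ⟨y, ⟨hyC, -⟩, hy⟩ := ((isCompact_closedBall _ _).inter_left hCcl).inter_iInter_nonempty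
    (fun q : T => ball q) (fun _ => Metric.isClosed_closedBall) hfin
  refine ⟨y, hyC, fun q hq => ?_⟩
  simpa only [ball, Metric.mem_closedBall, dist_eq_norm] using mem_iInter.1 hy ⟨q, hq⟩

theorem exists_lipschitz_extension_range_subset {L : ℝ} (hL : 0 ≤ L) {C : Set F}
    (hC : Convex ℝ C) (hCcl : IsClosed C) {S : Set E} (hS : S.Nonempty) {f : E → F}
    (hfC : MapsTo f S C) (hf : ∀ x ∈ S, ∀ y ∈ S, ‖f x - f y‖ ≤ L * ‖x - y‖) :
    ∃ g : E → F, EqOn g f S ∧ (∀ x y, ‖g x - g y‖ ≤ L * ‖x - y‖) ∧ range g ⊆ C := by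
  let graph : Set (E × F) := (fun x => (x, f x)) '' S
  let admissible : Set (Set (E × F)) :=
    {T | graph ⊆ T ∧ (∀ p ∈ T, p.2 ∈ C) ∧ LipschitzRel L T}
  have hgraph : graph ∈ admissible := by
    refine ⟨subset_rfl, ?_, ?_⟩
    · rintro _ ⟨x, hx, rfl⟩
      exact hfC hx
    · rintro _ ⟨x, hx, rfl⟩ _ ⟨y, hy, rfl⟩
      exact hf x hx y hy
  obtain ⟨M, hgraphM, hmax⟩ := zorn_subset_nonempty admissible
    (fun c hc hchain ⟨T, hT⟩ => ⟨⋃₀ c, ⟨(hc hT).1.trans (subset_sUnion_of_mem hT),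
      fun p ⟨U, hU, hp⟩ => (hc hU).2.1 p hp,
      LipschitzRel.sUnion_of_isChain (fun U hU => (hc hU).2.2) hchain⟩,
      fun _ => subset_sUnion_of_mem⟩) graph hgraph
  obtain ⟨-, hMC, hM⟩ := hmax.prop
  have htotal (x : E) : ∃ y, (x, y) ∈ M := by
    obtain ⟨y, hyC, hy⟩ := hM.exists_mem_forall_norm_sub_le hL hC hCcl
      (hS.image _ |>.mono hgraphM) hMC x
    refine ⟨y, hmax.mem_of_prop_insert ⟨hgraphM.trans (subset_insert _ _), ?_,
      hM.insert_of_norm_sub_le hy⟩⟩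
    rintro p (rfl | hp)
    exacts [hyC, hMC p hp]
  choose g hg using htotal
  refine ⟨g, fun x hx => ?_, fun x y => hM _ (hg x) _ (hg y), ?_⟩
  · simpa [sub_eq_zero] using hM _ (hg x) _ (hgraphM ⟨x, hx, rfl⟩)
  · rintro _ ⟨x, rfl⟩
    exact hMC _ (hg x)

end

/-- Strengthened Kirszbraun theorem: every `L`-Lipschitz map `f : S → ℝⁿ`, `∅ ≠ S ⊆ ℝᵐ`,
extends to an `L`-Lipschitz map `F : ℝᵐ → ℝⁿ` with range contained in the closure of the
convex hull of `f '' S`. -/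
theorem kirszbraun_range (m n : ℕ) (L : ℝ) (hL : 0 ≤ L)
    (S : Set (EuclideanSpace ℝ (Fin m))) (hS : S.Nonempty)
    (f : EuclideanSpace ℝ (Fin m) → EuclideanSpace ℝ (Fin n))
    (hf : ∀ x ∈ S, ∀ y ∈ S, ‖f x - f y‖ ≤ L * ‖x - y‖) :
    ∃ F : EuclideanSpace ℝ (Fin m) → EuclideanSpace ℝ (Fin n),
      (∀ x ∈ S, F x = f x) ∧ (∀ x y, ‖F x - F y‖ ≤ L * ‖x - y‖) ∧
      Set.range F ⊆ closure (convexHull ℝ (f '' S)) := by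
  exact exists_lipschitz_extension_range_subset hL (convex_convexHull ℝ (f '' S)).closure
    isClosed_closure hS
    (fun x hx => subset_closure (subset_convexHull ℝ _ (mem_image_of_mem f hx))) hf
end

section
/- Helly's theorem with a finite transversal: Let n be a natural number, let {C_i}_{i ∈ ι} be a family of convex subsets of ℝⁿ (not assumed closed or bounded), and suppose there is a finite set P = {p₁, …, p_k} ⊆ ℝⁿ with the property that for every finite set I ⊆ ι with at most n + 1 elements there exists p ∈ P with p ∈ C_i for all i ∈ I. Then the intersection ⋂_{i ∈ ι} C_i is nonempty. -/
/-!
Shrink each `C i` to the convex hull of `C i ∩ P`. These hulls are still convex, still contain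
a common point of any `n + 1` of them, and — being hulls of subsets of the finite set `P` — there
are only finitely many distinct ones. Hence the whole intersection is an intersection of finitely
many of them, to which the finite Helly theorem applies; no closedness or compactness is needed.
-/

open Set Finset Module

theorem Set.exists_finset_biInter_eq_iInter_of_finite_range {ι α : Type*} {F : ι → Set α}
    (hF : (range F).Finite) : ∃ s : Finset ι, ⋂ i ∈ s, F i = ⋂ i, F i := by
  classical
  have := hF.fintype
  refine ⟨Finset.univ.image (rangeSplitting F),
    (subset_iInter fun j => ?_).antisymm (iInter_subset_iInter₂ _ _)⟩
  have hj : rangeSplitting F ⟨F j, mem_range_self j⟩ ∈ Finset.univ.image (rangeSplitting F) :=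
    Finset.mem_image_of_mem _ (Finset.mem_univ _)
  exact (biInter_subset_of_mem hj).trans (apply_rangeSplitting F _).le

theorem Convex.helly_of_finite_transversal {𝕜 E ι : Type*} [Field 𝕜] [LinearOrder 𝕜]
    [IsStrictOrderedRing 𝕜] [AddCommGroup E] [Module 𝕜 E] [FiniteDimensional 𝕜 E]
    {C : ι → Set E} (hconv : ∀ i, Convex 𝕜 (C i)) {P : Set E} (hPfin : P.Finite)
    (hP : ∀ I : Finset ι, #I ≤ finrank 𝕜 E + 1 → ∃ p ∈ P, ∀ i ∈ I, p ∈ C i) :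
    (⋂ i, C i).Nonempty := by
  set D : ι → Set E := fun i => convexHull 𝕜 (C i ∩ P)
  have hD_range : (range D).Finite := by
    have : (range fun i => C i ∩ P).Finite :=
      hPfin.finite_subsets.subset (range_subset_iff.2 fun i => inter_subset_right)
    exact (this.image (convexHull 𝕜)).subset (range_comp _ _).le
  obtain ⟨s, hs⟩ := exists_finset_biInter_eq_iInter_of_finite_range hD_range
  have hD : (⋂ i ∈ s, D i).Nonempty := by
    refine Convex.helly_theorem' (fun i _ => convex_convexHull 𝕜 _) fun I _ hI => ?_
    obtain ⟨p, hpP, hp⟩ := hP I hI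
    exact ⟨p, mem_iInter₂.2 fun i hi => subset_convexHull 𝕜 _ ⟨hp i hi, hpP⟩⟩
  rw [hs] at hD
  exact hD.mono (iInter_mono fun i => (hconv i).convexHull_subset_iff.2 inter_subset_left)

/-- Helly's theorem with a finite transversal: if `{C i}` is a family of convex subsets
of `ℝⁿ` and `P` is a finite set of points such that every subfamily of at most `n + 1`
sets has a common point lying in `P`, then the whole family has a common point. -/
theorem helly_finite_transversal (n : ℕ) {ι : Type*}
    (C : ι → Set (EuclideanSpace ℝ (Fin n)))
    (hconv : ∀ i, Convex ℝ (C i))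
    (P : Finset (EuclideanSpace ℝ (Fin n)))
    (hP : ∀ I : Finset ι, I.card ≤ n + 1 → ∃ p ∈ P, ∀ i ∈ I, p ∈ C i) :
    (⋂ i, C i).Nonempty :=
  Convex.helly_of_finite_transversal hconv P.finite_toSet <| by
    simpa only [finrank_euclideanSpace_fin, Finset.mem_coe] using hP
end

section
/- Helly's theorem with one bounded finite intersection: Let n be a natural number and let {C_i}_{i ∈ ι} be a family of closed convex subsets of ℝⁿ such that every finite subfamily with at most n + 1 members has a common point, and such that for some nonempty finite set I₀ ⊆ ι the intersection ⋂_{i ∈ I₀} C_i is bounded. Then the intersection ⋂_{i ∈ ι} C_i is nonempty. -/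
/-- Helly's theorem with one bounded finite intersection: if `{C i}` is a family of
closed convex subsets of `ℝⁿ` such that every subfamily of at most `n + 1` sets has a
common point, and for some nonempty finite `I₀` the intersection `⋂ i ∈ I₀, C i` is
bounded, then the whole family has a common point. -/
theorem helly_one_bounded (n : ℕ) {ι : Type*}
    (C : ι → Set (EuclideanSpace ℝ (Fin n)))
    (hclosed : ∀ i, IsClosed (C i)) (hconv : ∀ i, Convex ℝ (C i))
    (hfin : ∀ I : Finset ι, I.card ≤ n + 1 → (⋂ i ∈ I, C i).Nonempty)
    (I₀ : Finset ι) (hI₀ : I₀.Nonempty)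
    (hbdd : Bornology.IsBounded (⋂ i ∈ I₀, C i)) :
    (⋂ i, C i).Nonempty := by
  classical
  have hrank : Module.finrank ℝ (EuclideanSpace ℝ (Fin n)) = n := by
    simp [finrank_euclideanSpace]
  -- every finite subfamily has nonempty intersection
  have hall : ∀ s : Finset ι, (⋂ i ∈ s, C i).Nonempty := by
    intro s
    apply Convex.helly_theorem' (fun i _ ↦ hconv i)
    intro I _ hIcard
    exact hfin I (by rwa [hrank] at hIcard)
  -- the set K is compact
  have hKclosed : IsClosed (⋂ i ∈ I₀, C i) :=
    isClosed_biInter fun i _ ↦ hclosed i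
  have hK : IsCompact (⋂ i ∈ I₀, C i) :=
    Metric.isCompact_of_isClosed_isBounded hKclosed hbdd
  have := hK.inter_iInter_nonempty C hclosed (fun u ↦ by
    have h := hall (I₀ ∪ u)
    obtain ⟨x, hx⟩ := h
    refine ⟨x, ?_, ?_⟩
    · exact Set.mem_biInter fun i hi ↦
        Set.mem_iInter₂.mp hx i (Finset.mem_union_left _ hi)
    · exact Set.mem_biInter fun i hi ↦
        Set.mem_iInter₂.mp hx i (Finset.mem_union_right _ hi))
  exact this.mono Set.inter_subset_right
end

section
/- Helly's theorem for common translates: Let n be a natural number, let {C_i}_{i ∈ ι} be a family of compact convex subsets of ℝⁿ, and let K ⊆ ℝⁿ be a compact convex set. Suppose that for every finite set I ⊆ ι with at most n + 1 elements there exists x ∈ ℝⁿ such that the translate x + K intersects C_i nontrivially for every i ∈ I. Then there exists x ∈ ℝⁿ such that the translate x + K intersects C_i nontrivially for every i ∈ ι. -/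
open scoped Pointwise

/-- Helly's theorem for common translates: if `{C i}` is a family of compact convex
subsets of `ℝⁿ` and `K ⊆ ℝⁿ` is compact convex such that for every subfamily of at most
`n + 1` sets some translate of `K` meets all its members, then some translate of `K`
meets every member of the family. -/
theorem helly_translates (n : ℕ) {ι : Type*}
    (C : ι → Set (EuclideanSpace ℝ (Fin n)))
    (hconv : ∀ i, Convex ℝ (C i)) (hcomp : ∀ i, IsCompact (C i))
    (K : Set (EuclideanSpace ℝ (Fin n))) (hK : IsCompact K) (hKconv : Convex ℝ K)
    (hfin : ∀ I : Finset ι, I.card ≤ n + 1 →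
      ∃ x : EuclideanSpace ℝ (Fin n), ∀ i ∈ I, ∃ k ∈ K, x + k ∈ C i) :
    ∃ x : EuclideanSpace ℝ (Fin n), ∀ i, ∃ k ∈ K, x + k ∈ C i := by
  have hmem : ∀ (i : ι) (x : EuclideanSpace ℝ (Fin n)),
      x ∈ C i - K ↔ ∃ k ∈ K, x + k ∈ C i := by
    intro i x
    constructor
    · rintro ⟨c, hc, k, hk, rfl⟩
      exact ⟨k, hk, by simpa using hc⟩
    · rintro ⟨k, hk, hc⟩
      exact ⟨x + k, hc, k, hk, by simp⟩
  have h := Convex.helly_theorem_compact' (𝕜 := ℝ) (F := fun i => C i - K)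
    (fun i => (hconv i).sub hKconv) (fun i => by simp only [sub_eq_add_neg]; exact (hcomp i).add hK.neg) ?_
  · obtain ⟨x, hx⟩ := h
    exact ⟨x, fun i => (hmem i x).1 (Set.mem_iInter.1 hx i)⟩
  · intro I hI
    rw [finrank_euclideanSpace_fin] at hI
    obtain ⟨x, hx⟩ := hfin I hI
    exact ⟨x, Set.mem_iInter₂.2 fun i hi => (hmem i x).2 (hx i hi)⟩
end

section
/- Jung's theorem: Let n be a natural number and let S be a subset of ℝⁿ of diameter at most 1, i.e. ‖x − y‖ ≤ 1 for all x, y ∈ S. Then there exists a point c ∈ ℝⁿ such that S is contained in the closed ball of radius √(n / (2(n + 1))) centered at c. -/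
/-!
By Helly's theorem it suffices to treat at most `n + 1` points. For such a finite set, let `c` be
the centre of its smallest enclosing ball and `R` its radius. If `c` were outside the convex hull
of the points at distance `R`, moving `c` slightly towards that hull would shrink the ball; hence
`c = ∑ w x • x` with weights `w x ≥ 0` of sum `1` over those points. Since `c` is then their
barycentre, `∑ x, ∑ y, w x * w y * ‖x - y‖ ^ 2 = 2 * R ^ 2`, whereas the diameter bound makes the
left side at most `1 - ∑ x, w x ^ 2 ≤ 1 - 1 / (n + 1)`.
-/

open Finset Filter Metric Topology
open scoped RealInnerProductSpace

theorem sum_sum_mul_mul_norm_sub_sq_le {E ι : Type*} [SeminormedAddCommGroup E] (s : Finset ι)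
    {w : ι → ℝ} {p : ι → E} (hw : ∀ i ∈ s, 0 ≤ w i) (hp : ∀ i ∈ s, ∀ j ∈ s, ‖p i - p j‖ ≤ 1) :
    ∑ i ∈ s, ∑ j ∈ s, w i * w j * ‖p i - p j‖ ^ 2 ≤ (∑ i ∈ s, w i) ^ 2 - ∑ i ∈ s, w i ^ 2 := by
  classical
  have hterm : ∀ i ∈ s, ∀ j ∈ s,
      w i * w j * ‖p i - p j‖ ^ 2 ≤ w i * w j - if i = j then w i * w j else 0 := by
    intro i hi j hj
    split_ifs with hij
    · simp [hij]
    · have : ‖p i - p j‖ ^ 2 ≤ 1 := pow_le_one₀ (norm_nonneg _) (hp i hi j hj)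
      nlinarith [mul_nonneg (hw i hi) (hw j hj)]
  calc ∑ i ∈ s, ∑ j ∈ s, w i * w j * ‖p i - p j‖ ^ 2
      ≤ ∑ i ∈ s, ∑ j ∈ s, (w i * w j - if i = j then w i * w j else 0) :=
        sum_le_sum fun i hi => sum_le_sum fun j hj => hterm i hi j hj
    _ = (∑ i ∈ s, w i) ^ 2 - ∑ i ∈ s, w i ^ 2 := by
        simp [sum_sub_distrib, sq, sum_mul_sum]

variable {E : Type*} [NormedAddCommGroup E] [InnerProductSpace ℝ E]

theorem sum_sum_mul_mul_norm_sub_sq {ι : Type*} (s : Finset ι) (w : ι → ℝ) (p : ι → E) :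
    ∑ i ∈ s, ∑ j ∈ s, w i * w j * ‖p i - p j‖ ^ 2 =
      2 * (∑ i ∈ s, w i) * ∑ i ∈ s, w i * ‖p i‖ ^ 2 - 2 * ‖∑ i ∈ s, w i • p i‖ ^ 2 := by
  have hnorm : ‖∑ i ∈ s, w i • p i‖ ^ 2 = ∑ i ∈ s, ∑ j ∈ s, w i * w j * ⟪p i, p j⟫ := by
    rw [← real_inner_self_eq_norm_sq, sum_inner]
    simp only [inner_sum, real_inner_smul_left, real_inner_smul_right]
    exact sum_congr rfl fun i _ => sum_congr rfl fun j _ => by ring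
  have hexpand : ∀ i j, w i * w j * ‖p i - p j‖ ^ 2 =
      w i * ‖p i‖ ^ 2 * w j + w i * (w j * ‖p j‖ ^ 2) - 2 * (w i * w j * ⟪p i, p j⟫) := by
    intro i j
    rw [norm_sub_sq_real]
    ring
  simp only [hexpand, hnorm, sum_add_distrib, sum_sub_distrib, ← mul_sum, ← sum_mul]
  ring

theorem sq_le_of_mem_convexHull_of_dist_eq {K : Finset E} {m : ℕ} (hcard : #K ≤ m + 1)
    (hK : ∀ x ∈ K, ∀ y ∈ K, ‖x - y‖ ≤ 1) {c : E} {R : ℝ} (hR : ∀ x ∈ K, dist x c = R)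
    (hc : c ∈ convexHull ℝ (K : Set E)) : R ^ 2 ≤ m / (2 * (m + 1)) := by
  obtain ⟨w, hw0, hw1, hwc⟩ := Finset.mem_convexHull'.1 hc
  have hbalanced : ∑ x ∈ K, w x • (x - c) = 0 := by
    simp only [smul_sub, sum_sub_distrib, hwc, ← sum_smul, hw1, one_smul, sub_self]
  have hvariance : ∑ x ∈ K, ∑ y ∈ K, w x * w y * ‖x - y‖ ^ 2 = 2 * R ^ 2 := by
    have h := sum_sum_mul_mul_norm_sub_sq K w (· - c)
    simp only [sub_sub_sub_cancel_right, hbalanced, norm_zero] at h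
    rw [h, sum_congr rfl fun x hx => show w x * ‖x - c‖ ^ 2 = w x * R ^ 2 by
      rw [← dist_eq_norm, hR x hx], ← sum_mul, hw1]
    ring
  have hdiam := sum_sum_mul_mul_norm_sub_sq_le K hw0 hK
  have hcs : 1 ≤ (m + 1 : ℝ) * ∑ x ∈ K, w x ^ 2 := by
    calc (1 : ℝ) = (∑ x ∈ K, w x) ^ 2 := by rw [hw1, one_pow]
      _ ≤ #K * ∑ x ∈ K, w x ^ 2 := sq_sum_le_card_mul_sum_sq
      _ ≤ (m + 1 : ℝ) * ∑ x ∈ K, w x ^ 2 :=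
        mul_le_mul_of_nonneg_right (by exact_mod_cast hcard) (sum_nonneg fun x _ => sq_nonneg _)
  rw [le_div_iff₀ (by positivity)]
  rw [hvariance, hw1] at hdiam
  nlinarith

theorem exists_inner_sub_pos_of_notMem [CompleteSpace E] {s : Set E} (hconv : Convex ℝ s)
    (hclosed : IsClosed s) {c : E} (hc : c ∉ s) : ∃ v : E, ∀ x ∈ s, 0 < ⟪v, x - c⟫ := by
  obtain ⟨f, u, hfc, hfs⟩ := geometric_hahn_banach_point_closed hconv hclosed hc
  refine ⟨(InnerProductSpace.toDual ℝ E).symm f, fun x hx => ?_⟩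
  rw [inner_sub_right, InnerProductSpace.toDual_symm_apply, InnerProductSpace.toDual_symm_apply]
  linarith [hfs x hx]

theorem eventually_dist_add_smul_lt {c v x : E} (h : 0 < ⟪v, x - c⟫) :
    ∀ᶠ t in 𝓝[>] (0 : ℝ), dist x (c + t • v) < dist x c := by
  have hsmall : ∀ᶠ t in 𝓝 (0 : ℝ), t * ‖v‖ ^ 2 < 2 * ⟪v, x - c⟫ :=
    (continuous_id.mul continuous_const).continuousAt.eventually_lt continuousAt_const
      (by simpa using h)
  filter_upwards [nhdsWithin_le_nhds hsmall, self_mem_nhdsWithin] with t ht (htpos : 0 < t)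
  rw [dist_eq_norm, dist_eq_norm, ← sq_lt_sq₀ (norm_nonneg _) (norm_nonneg _),
    show x - (c + t • v) = (x - c) - t • v by abel, norm_sub_sq_real, norm_smul,
    real_inner_smul_right, real_inner_comm, Real.norm_eq_abs, abs_of_pos htpos]
  nlinarith

theorem exists_forall_sup'_dist_le {α : Type*} [MetricSpace α] [ProperSpace α] {T : Finset α}
    (hT : T.Nonempty) : ∃ c, ∀ c', T.sup' hT (dist · c) ≤ T.sup' hT (dist · c') := by
  have ⟨x₀, hx₀⟩ := hT
  have hcont : Continuous fun c => T.sup' hT (dist · c) :=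
    Continuous.finset_sup'_apply hT fun x _ => continuous_const.dist continuous_id
  refine hcont.exists_forall_le' x₀ ?_
  filter_upwards [(tendsto_dist_left_cocompact_atTop x₀).eventually_ge_atTop
    (T.sup' hT (dist · x₀))] with c hc
  exact hc.trans (dist_comm x₀ c ▸ le_sup' (dist · c) hx₀)

theorem mem_convexHull_filter_dist_eq_sup' [CompleteSpace E] {T : Finset E} (hT : T.Nonempty)
    {c : E} (hc : ∀ c', T.sup' hT (dist · c) ≤ T.sup' hT (dist · c')) :
    c ∈ convexHull ℝ (T.filter (dist · c = T.sup' hT (dist · c)) : Set E) := by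
  set R := T.sup' hT (dist · c)
  by_contra hK
  obtain ⟨v, hv⟩ := exists_inner_sub_pos_of_notMem (convex_convexHull ℝ _)
    ((Set.toFinite _).isCompact_convexHull (𝕜 := ℝ)).isClosed hK
  have hcloser : ∀ x ∈ T, ∀ᶠ t in 𝓝[>] (0 : ℝ), dist x (c + t • v) < R := by
    intro x hx
    rcases (le_sup' (dist · c) hx).lt_or_eq with hlt | heq
    · refine nhdsWithin_le_nhds ((continuous_const.dist (continuous_const.add
        (continuous_id.smul continuous_const))).continuousAt.eventually_lt continuousAt_const ?_)
      simpa using hlt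
    · change dist x c = R at heq
      rw [← heq]
      exact eventually_dist_add_smul_lt (hv x (subset_convexHull ℝ _ (mem_filter.2 ⟨hx, heq⟩)))
  obtain ⟨t, ht⟩ := ((eventually_all_finset T).2 hcloser).exists
  exact (hc (c + t • v)).not_gt ((sup'_lt_iff hT).2 ht)

theorem exists_dist_le_sqrt_of_card_le [FiniteDimensional ℝ E] (T : Finset E) {m : ℕ}
    (hcard : #T ≤ m + 1) (hT : ∀ x ∈ T, ∀ y ∈ T, ‖x - y‖ ≤ 1) :
    ∃ c, ∀ x ∈ T, dist x c ≤ √(m / (2 * (m + 1))) := by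
  rcases T.eq_empty_or_nonempty with rfl | hne
  · exact ⟨0, by simp⟩
  obtain ⟨c, hc⟩ := exists_forall_sup'_dist_le hne
  refine ⟨c, fun x hx => (le_sup' (dist · c) hx).trans (Real.le_sqrt_of_sq_le ?_)⟩
  exact sq_le_of_mem_convexHull_of_dist_eq ((card_filter_le _ _).trans hcard)
    (fun x hx y hy => hT x (mem_filter.1 hx).1 y (mem_filter.1 hy).1)
    (fun x hx => (mem_filter.1 hx).2) (mem_convexHull_filter_dist_eq_sup' hne hc)

/-- Jung's theorem: every subset of `ℝⁿ` of diameter at most `1` is contained in a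
closed ball of radius `√(n / (2(n + 1)))`. -/
theorem jung (n : ℕ) (S : Set (EuclideanSpace ℝ (Fin n)))
    (hS : ∀ x ∈ S, ∀ y ∈ S, ‖x - y‖ ≤ 1) :
    ∃ c : EuclideanSpace ℝ (Fin n),
      S ⊆ Metric.closedBall c (Real.sqrt (n / (2 * (n + 1)))) := by
  obtain ⟨c, hc⟩ : (⋂ x : S, closedBall (x : EuclideanSpace ℝ (Fin n))
      (Real.sqrt (n / (2 * (n + 1))))).Nonempty := by
    refine Convex.helly_theorem_compact' (𝕜 := ℝ) (fun _ => convex_closedBall _ _)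
      (fun _ => isCompact_closedBall _ _) fun I hI => ?_
    rw [finrank_euclideanSpace_fin] at hI
    obtain ⟨c, hc⟩ := exists_dist_le_sqrt_of_card_le (I.map (Function.Embedding.subtype _))
      (by simpa using hI) (by simpa using fun x hx _ y hy _ => hS x hx y hy)
    exact ⟨c, Set.mem_iInter₂.2 fun x hx => mem_closedBall_comm.1 (hc x (mem_map_of_mem _ hx))⟩
  exact ⟨c, fun x hx => mem_closedBall_comm.1 (Set.mem_iInter.1 hc ⟨x, hx⟩)⟩
end

section
/- KKM theorem for families of convex sets: Let n be a natural number, let A be a nonempty compact subset of ℝⁿ, and let {C_a}_{a ∈ A} be a family of subsets of A, indexed by the points of A, such that each C_a is closed and convex, and such that for every finite subset F of A the convex hull of F is contained in ⋃_{a ∈ F} C_a. Then the intersection ⋂_{a ∈ A} C_a is nonempty. -/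
/-!
By compactness of `A` it suffices that finitely many of the `C a` meet. For a finite `F ⊆ A`
the sets `C a ∩ conv F`, `a ∈ F`, are compact, convex and cover the convex set `conv F`, and by
induction on `F` any subfamily omitting one of them meets inside `conv F`; Berge's intersection
theorem then gives a common point.

Berge's theorem is proved by induction on the number of sets. If `C k` missed the intersection
`B` of the others, a hyperplane `H` strictly separating them would cut the others into compact
convex sets `C i ∩ H` that again satisfy the hypotheses (by the intermediate value theorem along
segments from `C k` to `B`), hence meet, in a point of `B ∩ H = ∅`.
-/

open Set

section

variable {E : Type*} [AddCommGroup E] [Module ℝ E]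

def IsKKMFamily (A : Set E) (C : E → Set E) : Prop :=
  ∀ F : Finset E, ↑F ⊆ A → convexHull ℝ (F : Set E) ⊆ ⋃ a ∈ F, C a

theorem IsKKMFamily.mem_self {A : Set E} {C : E → Set E} (h : IsKKMFamily A C) {a : E}
    (ha : a ∈ A) : a ∈ C a := by
  simpa using h {a} (by simpa using ha) (subset_convexHull ℝ _ (by simp))

variable [TopologicalSpace E] [IsTopologicalAddGroup E] [ContinuousSMul ℝ E]
  [LocallyConvexSpace ℝ E] [T2Space E]

-- The factor `⋃ j ∈ F, C j` in `herase` only matters when `F` is a singleton.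
theorem nonempty_biInter_of_convex_biUnion {ι : Type*} [DecidableEq ι]
    {F : Finset ι} (hF : F.Nonempty) {C : ι → Set E} (hcomp : ∀ i ∈ F, IsCompact (C i))
    (hconv : ∀ i ∈ F, Convex ℝ (C i)) (hU : Convex ℝ (⋃ i ∈ F, C i))
    (herase : ∀ i ∈ F, ((⋃ j ∈ F, C j) ∩ ⋂ j ∈ F.erase i, C j).Nonempty) :
    (⋂ i ∈ F, C i).Nonempty := by
  induction hF using Finset.Nonempty.cons_induction generalizing C with
  | singleton k => simpa using herase k (by simp)
  | cons k G hkG hG ih =>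
    rw [Finset.cons_eq_insert] at *
    set S := ⋃ j ∈ insert k G, C j
    by_contra hempty
    have hdisj : Disjoint (C k) (⋂ j ∈ G, C j) := by
      rwa [Finset.set_biInter_insert, not_nonempty_iff_eq_empty,
        ← disjoint_iff_inter_eq_empty] at hempty
    obtain ⟨f, u, v, hfk, huv, hfG⟩ := geometric_hahn_banach_compact_closed
      (hconv k (by simp)) (hcomp k (by simp))
      (convex_iInter₂ fun j hj => hconv j (Finset.mem_insert_of_mem hj))
      (isClosed_biInter fun j hj => (hcomp j (Finset.mem_insert_of_mem hj)).isClosed) hdisj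
    set H := {x | f x = u}
    have hSH : ⋃ i ∈ G, (C i ∩ H) = S ∩ H := by
      have hkH : C k ∩ H = ∅ := eq_empty_of_forall_notMem fun x hx => (hfk x hx.1).ne hx.2
      simp only [S, Finset.set_biUnion_insert, union_inter_distrib_right, hkH, empty_union,
        iUnion₂_inter]
    have hcross : ∀ i ∈ G, ((S ∩ H) ∩ ⋂ j ∈ G.erase i, (C j ∩ H)).Nonempty := by
      intro i hi
      have hik : k ≠ i := fun h => hkG (h ▸ hi)
      obtain ⟨p, hpS, hp⟩ := herase i (Finset.mem_insert_of_mem hi)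
      rw [Finset.erase_insert_of_ne hik, Finset.set_biInter_insert] at hp
      obtain ⟨q, hqS, hq⟩ := herase k (by simp)
      rw [Finset.erase_insert hkG] at hq
      have hT : Convex ℝ (S ∩ ⋂ j ∈ G.erase i, C j) :=
        hU.inter (convex_iInter₂ fun j hj => hconv j (Finset.mem_insert_of_mem (Finset.mem_of_mem_erase hj)))
      obtain ⟨z, ⟨hzS, hz⟩, hzu⟩ := hT.isPreconnected.intermediate_value ⟨hpS, hp.2⟩
        ⟨hqS, biInter_subset_biInter_left (Finset.erase_subset i G) hq⟩
        f.continuous.continuousOn ⟨(hfk p hp.1).le, (huv.trans (hfG q hq)).le⟩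
      exact ⟨z, ⟨hzS, hzu⟩, mem_iInter₂.2 fun j hj => ⟨mem_iInter₂.1 hz j hj, hzu⟩⟩
    obtain ⟨w, hw⟩ := ih (C := fun i => C i ∩ H)
      (fun i hi => (hcomp i (Finset.mem_insert_of_mem hi)).inter_right (isClosed_eq f.continuous continuous_const))
      (fun i hi => (hconv i (Finset.mem_insert_of_mem hi)).inter (convex_hyperplane f.isLinear u))
      (by rw [hSH]; exact hU.inter (convex_hyperplane f.isLinear u))
      (by rw [hSH]; exact hcross)
    obtain ⟨j, hj⟩ := hG
    have hwG : w ∈ ⋂ j ∈ G, C j := mem_iInter₂.2 fun i hi => (mem_iInter₂.1 hw i hi).1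
    exact (huv.trans (hfG w hwG)).ne' (mem_iInter₂.1 hw j hj).2

namespace IsKKMFamily

variable {A : Set E} {C : E → Set E}

theorem nonempty_convexHull_inter_biInter (h : IsKKMFamily A C)
    (hclosed : ∀ a ∈ A, IsClosed (C a)) (hconv : ∀ a ∈ A, Convex ℝ (C a)) {F : Finset E}
    (hF : F.Nonempty) (hFA : ↑F ⊆ A) : (convexHull ℝ ↑F ∩ ⋂ a ∈ F, C a).Nonempty := by
  classical
  induction hF using Finset.Nonempty.strong_induction with
  | h₀ a => exact ⟨a, by simpa using h.mem_self (by simpa using hFA)⟩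
  | @h₁ F hF ih =>
    set K := convexHull ℝ (F : Set E)
    have hUK : ⋃ a ∈ F, (C a ∩ K) = K := by
      rw [← iUnion₂_inter, inter_eq_right]
      exact h F hFA
    obtain ⟨x, hx⟩ := nonempty_biInter_of_convex_biUnion hF.nonempty (C := fun a => C a ∩ K)
      (fun a ha => (F.finite_toSet.isCompact_convexHull ℝ).inter_left (hclosed a (hFA ha)))
      (fun a ha => (hconv a (hFA ha)).inter (convex_convexHull ℝ _))
      (by rw [hUK]; exact convex_convexHull ℝ _)
      fun a ha => by
        obtain ⟨y, hyK, hyC⟩ := ih (F.erase a) hF.erase_nonempty (Finset.erase_ssubset ha)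
          ((Finset.coe_subset.2 (F.erase_subset a)).trans hFA)
        have hyK' : y ∈ K := convexHull_mono (Finset.coe_subset.2 (F.erase_subset a)) hyK
        rw [hUK]
        exact ⟨y, hyK', mem_iInter₂.2 fun j hj => ⟨mem_iInter₂.1 hyC j hj, hyK'⟩⟩
    refine ⟨x, ?_, mem_iInter₂.2 fun a ha => (mem_iInter₂.1 hx a ha).1⟩
    obtain ⟨a, ha⟩ := hF.nonempty
    exact (mem_iInter₂.1 hx a ha).2

theorem nonempty_biInter (h : IsKKMFamily A C) (hA : A.Nonempty) (hAcomp : IsCompact A)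
    (hsub : ∀ a ∈ A, C a ⊆ A) (hclosed : ∀ a ∈ A, IsClosed (C a))
    (hconv : ∀ a ∈ A, Convex ℝ (C a)) : (⋂ a ∈ A, C a).Nonempty := by
  classical
  have hfin : ∀ u : Finset A, (A ∩ ⋂ a ∈ u, C a).Nonempty := by
    intro u
    rcases u.eq_empty_or_nonempty with rfl | hu
    · simpa using hA
    obtain ⟨x, -, hx⟩ := h.nonempty_convexHull_inter_biInter hclosed hconv
      (hu.map (f := Function.Embedding.subtype _)) (by simp)
    have hxu : ∀ a ∈ u, x ∈ C a := fun a ha => mem_iInter₂.1 hx a (Finset.mem_map_of_mem _ ha)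
    obtain ⟨a, ha⟩ := hu
    exact ⟨x, hsub a a.2 (hxu a ha), mem_iInter₂.2 hxu⟩
  obtain ⟨x, -, hx⟩ := hAcomp.inter_iInter_nonempty _ (fun a : A => hclosed a a.2) hfin
  exact ⟨x, by rwa [biInter_eq_iInter]⟩

end IsKKMFamily

end

/-- KKM theorem for families of convex sets: if `A ⊆ ℝⁿ` is nonempty and compact, and
`{C a}_{a ∈ A}` is a family of closed convex subsets of `A` such that for every finite
`F ⊆ A` the convex hull of `F` is contained in `⋃ a ∈ F, C a`, then `⋂ a ∈ A, C a` is
nonempty. -/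
theorem kkm_convex (n : ℕ) (A : Set (EuclideanSpace ℝ (Fin n)))
    (hA : A.Nonempty) (hAcomp : IsCompact A)
    (C : EuclideanSpace ℝ (Fin n) → Set (EuclideanSpace ℝ (Fin n)))
    (hsub : ∀ a ∈ A, C a ⊆ A)
    (hclosed : ∀ a ∈ A, IsClosed (C a))
    (hconv : ∀ a ∈ A, Convex ℝ (C a))
    (hkkm : ∀ F : Finset (EuclideanSpace ℝ (Fin n)), ↑F ⊆ A →
      convexHull ℝ (↑F : Set (EuclideanSpace ℝ (Fin n))) ⊆ ⋃ a ∈ F, C a) :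
    (⋂ a ∈ A, C a).Nonempty :=
  IsKKMFamily.nonempty_biInter hkkm hA hAcomp hsub hclosed hconv
end

section
/- One-point extension of nonexpansive maps: Let n be a natural number, let A be a subset of ℝⁿ, let f : A → ℝⁿ be a nonexpansive (1-Lipschitz) map, and let x ∈ ℝⁿ. Then there exists y ∈ ℝⁿ such that ‖y − f(a)‖ ≤ ‖x − a‖ for every a ∈ A; consequently f extends to a nonexpansive map on A ∪ {x} sending x to y. -/
/-!
Kirszbraun's argument. For finitely many points `a i` with images `v i`, the payoff
`Φ z w = ∑ i, w i * (‖z - v i‖ ^ 2 - ‖x - a i‖ ^ 2)`, for `z` in the convex hull of the `v i` and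
`w` in the standard simplex, is convex in `z` and linear in `w`, so Sion's minimax theorem gives a
saddle point `(y, w)`. At the barycentre `c = ∑ w j • v j` the payoff is
`∑ w i ‖c - v i‖² - ∑ w i ‖x - a i‖² ≤ 0`: a weighted spread `∑ w i ‖c - v i‖²` is half the
weighted mean of the pairwise squared distances, so it only grows from the `v i` to the `a i`,
and by the parallel axis identity the spread of the `a i` is at most `∑ w i ‖x - a i‖²`.
Testing the saddle point against the vertices of the simplex shows that `y` works.
For infinite `A`, the closed balls `closedBall (f a) ‖x - a‖` then have the finite intersection
property, and they are compact.
-/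

open Set Metric
open scoped RealInnerProductSpace

section Kirszbraun

variable {E F : Type*} [NormedAddCommGroup E] [InnerProductSpace ℝ E]
  [NormedAddCommGroup F] [InnerProductSpace ℝ F]

section Weighted

variable {ι : Type*} [Fintype ι]

theorem sum_mul_norm_sub_sq_eq_of_sum_eq_one {w : ι → ℝ} (hw : ∑ i, w i = 1) (v : ι → E)
    (z : E) :
    ∑ i, w i * ‖z - v i‖ ^ 2 =
      ‖z - ∑ j, w j • v j‖ ^ 2 + ∑ i, w i * ‖∑ j, w j • v j - v i‖ ^ 2 := by
  set c := ∑ j, w j • v j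
  have hc : ∑ i, w i • (c - v i) = 0 := by
    simp only [smul_sub, Finset.sum_sub_distrib, ← Finset.sum_smul, hw, one_smul, c, sub_self]
  calc ∑ i, w i * ‖z - v i‖ ^ 2
      = ∑ i, (w i * ‖z - c‖ ^ 2 + 2 * ⟪z - c, w i • (c - v i)⟫ + w i * ‖c - v i‖ ^ 2) := by
        refine Finset.sum_congr rfl fun i _ => ?_
        rw [← sub_add_sub_cancel z c (v i), norm_add_sq_real, inner_smul_right]
        ring
    _ = ‖z - c‖ ^ 2 + ∑ i, w i * ‖c - v i‖ ^ 2 := by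
        rw [Finset.sum_add_distrib, Finset.sum_add_distrib, ← Finset.sum_mul, hw, ← Finset.mul_sum,
          ← inner_sum, hc, inner_zero_right]
        ring

theorem sum_mul_sum_mul_norm_sub_sq_eq {w : ι → ℝ} (hw : ∑ i, w i = 1) (v : ι → E) :
    ∑ i, w i * ∑ j, w j * ‖v i - v j‖ ^ 2 = 2 * ∑ i, w i * ‖∑ j, w j • v j - v i‖ ^ 2 := by
  set Q := ∑ i, w i * ‖∑ j, w j • v j - v i‖ ^ 2
  calc ∑ i, w i * ∑ j, w j * ‖v i - v j‖ ^ 2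
      = ∑ i, (w i * ‖∑ j, w j • v j - v i‖ ^ 2 + w i * Q) := by
        refine Finset.sum_congr rfl fun i _ => ?_
        rw [sum_mul_norm_sub_sq_eq_of_sum_eq_one hw, norm_sub_rev, mul_add]
    _ = 2 * Q := by rw [Finset.sum_add_distrib, ← Finset.sum_mul, hw]; ring

theorem sum_mul_norm_sum_smul_sub_sq_le {w : ι → ℝ} (hw : w ∈ stdSimplex ℝ ι)
    {v : ι → F} {a : ι → E} (hva : ∀ i j, ‖v i - v j‖ ≤ ‖a i - a j‖) (x : E) :
    ∑ i, w i * ‖∑ j, w j • v j - v i‖ ^ 2 ≤ ∑ i, w i * ‖x - a i‖ ^ 2 := by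
  have hdist : ∑ i, w i * ∑ j, w j * ‖v i - v j‖ ^ 2 ≤ ∑ i, w i * ∑ j, w j * ‖a i - a j‖ ^ 2 := by
    gcongr with i _ j _
    · exact hw.1 i
    · exact hw.1 j
    · exact hva i j
  rw [sum_mul_sum_mul_norm_sub_sq_eq hw.2, sum_mul_sum_mul_norm_sub_sq_eq hw.2] at hdist
  rw [sum_mul_norm_sub_sq_eq_of_sum_eq_one hw.2 a x]
  nlinarith [sq_nonneg ‖x - ∑ j, w j • a j‖]

theorem convexOn_sum_mul_norm_sub_sq {w : ι → ℝ} (hw : w ∈ stdSimplex ℝ ι) (v : ι → E)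
    (r : ι → ℝ) : ConvexOn ℝ univ fun z => ∑ i, w i * (‖z - v i‖ ^ 2 - r i) := by
  refine (((convexOn_univ_dist (∑ j, w j • v j)).pow (fun _ _ => dist_nonneg) 2).add_const
    (∑ i, w i * ‖∑ j, w j • v j - v i‖ ^ 2 - ∑ i, w i * r i)).congr fun z _ => ?_
  simp only [Pi.add_apply, Pi.pow_apply, dist_eq_norm, mul_sub, Finset.sum_sub_distrib]
  rw [sum_mul_norm_sub_sq_eq_of_sum_eq_one hw.2 v z]
  ring

theorem exists_forall_norm_sub_le_of_fintype {v : ι → F} {a : ι → E}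
    (hva : ∀ i j, ‖v i - v j‖ ≤ ‖a i - a j‖) (x : E) : ∃ y, ∀ i, ‖y - v i‖ ≤ ‖x - a i‖ := by
  classical
  cases isEmpty_or_nonempty ι
  · exact ⟨0, isEmptyElim⟩
  set Φ : F → (ι → ℝ) → ℝ := fun z w => ∑ i, w i * (‖z - v i‖ ^ 2 - ‖x - a i‖ ^ 2)
  have hX : IsCompact (convexHull ℝ (range v)) := (finite_range v).isCompact_convexHull (𝕜 := ℝ)
  -- `hyw : ∀ z ∈ convexHull ℝ (range v), ∀ w' ∈ stdSimplex ℝ ι, Φ y w' ≤ Φ z w`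
  obtain ⟨y, -, w, hw, hyw⟩ := Sion.exists_isSaddlePointOn (f := Φ)
    ((range_nonempty v).mono (subset_convexHull ℝ _)) (convex_convexHull ℝ _) hX
    (fun w _ => (by fun_prop : Continuous (Φ · w)).lowerSemicontinuous.lowerSemicontinuousOn _)
    (fun w hw => ((convexOn_sum_mul_norm_sub_sq hw v _).subset (subset_univ _)
      (convex_convexHull ℝ _)).quasiconvexOn)
    (convex_stdSimplex ℝ ι) ⟨_, single_mem_stdSimplex ℝ (Classical.arbitrary ι)⟩
    (isCompact_stdSimplex ℝ ι)
    (fun z _ => (by fun_prop : Continuous (Φ z)).upperSemicontinuous.upperSemicontinuousOn _)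
    (fun z _ => ((Fintype.linearCombination ℝ fun i => ‖z - v i‖ ^ 2 - ‖x - a i‖ ^ 2).concaveOn
      (convex_stdSimplex ℝ ι)).quasiconcaveOn)
  have hc : Φ (∑ j, w j • v j) w ≤ 0 := by
    have := sum_mul_norm_sum_smul_sub_sq_le hw hva x
    simp only [Φ, mul_sub, Finset.sum_sub_distrib]
    linarith
  refine ⟨y, fun i => ?_⟩
  have := (hyw _ ((convex_convexHull ℝ _).sum_mem (fun j _ => hw.1 j) hw.2
    fun j _ => subset_convexHull ℝ _ (mem_range_self j)) _ (single_mem_stdSimplex ℝ i)).trans hc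
  simpa [Φ, Pi.single_apply, sq_le_sq₀] using this

end Weighted

theorem exists_forall_norm_sub_le [ProperSpace F] {A : Set E} {f : E → F}
    (hf : ∀ a ∈ A, ∀ b ∈ A, ‖f a - f b‖ ≤ ‖a - b‖) (x : E) :
    ∃ y, ∀ a ∈ A, ‖y - f a‖ ≤ ‖x - a‖ := by
  classical
  rcases A.eq_empty_or_nonempty with rfl | ⟨a₀, ha₀⟩
  · exact ⟨0, fun a ha => ha.elim⟩
  obtain ⟨y, -, hy⟩ := (isCompact_closedBall (f a₀) ‖x - a₀‖).inter_iInter_nonempty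
    (fun a : A => closedBall (f a) ‖x - a‖) (fun _ => isClosed_closedBall) fun u => by
      obtain ⟨y, hy⟩ := exists_forall_norm_sub_le_of_fintype
        (v := fun a : ↥(insert ⟨a₀, ha₀⟩ u) => f a) (a := fun a => (a : E))
        (fun a b => hf _ a.1.2 _ b.1.2) x
      refine ⟨y, ?_, mem_iInter₂.2 fun a ha => ?_⟩
      · simpa [dist_eq_norm] using hy ⟨_, Finset.mem_insert_self _ _⟩
      · simpa [dist_eq_norm] using hy ⟨a, Finset.mem_insert_of_mem ha⟩
  exact ⟨y, fun a ha => by simpa [dist_eq_norm] using mem_iInter.1 hy ⟨a, ha⟩⟩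

end Kirszbraun

theorem norm_update_sub_update_le {E F : Type*} [SeminormedAddCommGroup E]
    [SeminormedAddCommGroup F] [DecidableEq E]
    {A : Set E} {f : E → F} (hf : ∀ a ∈ A, ∀ b ∈ A, ‖f a - f b‖ ≤ ‖a - b‖) {x : E} {y : F}
    (hy : ∀ a ∈ A, ‖y - f a‖ ≤ ‖x - a‖) :
    ∀ u ∈ insert x A, ∀ v ∈ insert x A,
      ‖Function.update f x y u - Function.update f x y v‖ ≤ ‖u - v‖ := by
  rintro u hu v hv
  rcases eq_or_ne u x with rfl | hux
  · rcases eq_or_ne v u with rfl | hvu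
    · simp
    · simpa [hvu] using hy v (hv.resolve_left hvu)
  · rcases eq_or_ne v x with rfl | hvx
    · rw [norm_sub_rev, norm_sub_rev u]
      simpa [hux] using hy u (hu.resolve_left hux)
    · simpa [hux, hvx] using hf u (hu.resolve_left hux) v (hv.resolve_left hvx)

/-- One-point extension of nonexpansive maps: if `f : A → ℝⁿ` (`A ⊆ ℝⁿ`) is nonexpansive
and `x ∈ ℝⁿ`, then there is `y ∈ ℝⁿ` with `‖y - f a‖ ≤ ‖x - a‖` for all `a ∈ A`;
consequently `f` extends to a nonexpansive map on `A ∪ {x}` sending `x` to `y`. -/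
theorem extend_nonexpansive_one_point (n : ℕ)
    (A : Set (EuclideanSpace ℝ (Fin n)))
    (f : EuclideanSpace ℝ (Fin n) → EuclideanSpace ℝ (Fin n))
    (hf : ∀ a ∈ A, ∀ b ∈ A, ‖f a - f b‖ ≤ ‖a - b‖)
    (x : EuclideanSpace ℝ (Fin n)) :
    ∃ y : EuclideanSpace ℝ (Fin n),
      (∀ a ∈ A, ‖y - f a‖ ≤ ‖x - a‖) ∧
      ∃ g : EuclideanSpace ℝ (Fin n) → EuclideanSpace ℝ (Fin n),
        (∀ a ∈ A, g a = f a) ∧ g x = y ∧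
        (∀ u ∈ A ∪ {x}, ∀ v ∈ A ∪ {x}, ‖g u - g v‖ ≤ ‖u - v‖) := by
  classical
  obtain ⟨y, hy⟩ := exists_forall_norm_sub_le hf x
  refine ⟨y, hy, Function.update f x y, fun a ha => ?_, Function.update_self x y f, ?_⟩
  · rcases eq_or_ne a x with rfl | hax
    · simpa [sub_eq_zero] using hy a ha
    · exact Function.update_of_ne hax y f
  · simpa only [union_singleton] using norm_update_sub_update_le hf hy
end

section
/- Uniform strict decrease of distances when moving toward the projection: Let n be a natural number, let C be a nonempty compact convex subset of ℝⁿ, let x ∈ ℝⁿ \ C, let p ∈ C satisfy ‖x − p‖ ≤ ‖x − c‖ for all c ∈ C (p is the nearest point of C to x), and let z = x + t·(p − x) for some real t with 0 < t ≤ 1. Then there exists δ > 0 such that ‖z − c‖ ≤ ‖x − c‖ − δ for every c ∈ C. -/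
/-!
Write `u = x - p`. The variational characterization of the nearest point gives
`⟪x - c, u⟫ ≥ ‖u‖²` for all `c ∈ C`, so expanding the square,
`‖z - c‖² = ‖x - c‖² - 2t⟪x - c, u⟫ + t²‖u‖² ≤ ‖x - c‖² - t‖u‖²`.
A uniform drop of the squared distances turns into a uniform drop of the distances
because `C` is bounded, say `‖x - c‖ ≤ M` on `C`:
`‖x - c‖ - ‖z - c‖ ≥ t‖u‖² / (‖x - c‖ + ‖z - c‖) ≥ t‖u‖² / 2M`.
-/

open RealInnerProductSpace

lemma le_sub_div_of_sq_add_le_sq {a b ε M : ℝ} (ha : 0 ≤ a) (hε : 0 ≤ ε)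
    (hsq : b ^ 2 + ε ≤ a ^ 2) (haM : a ≤ M) : b ≤ a - ε / (2 * M) := by
  have hba : b ≤ a := by nlinarith
  have hdiv : ε / (2 * M) ≤ a - b :=
    div_le_of_le_mul₀ (by linarith) (by linarith) (by nlinarith)
  linarith

section NearestPoint

variable {E : Type*} [NormedAddCommGroup E] [InnerProductSpace ℝ E]

lemma norm_sub_sq_le_inner_of_forall_norm_sub_le {K : Set E} (hK : Convex ℝ K) {x p : E}
    (hp : p ∈ K) (hnear : ∀ c ∈ K, ‖x - p‖ ≤ ‖x - c‖) {c : E} (hc : c ∈ K) :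
    ‖x - p‖ ^ 2 ≤ ⟪x - c, x - p⟫ := by
  have : Nonempty K := ⟨⟨p, hp⟩⟩
  have hinf : ‖x - p‖ = ⨅ w : K, ‖x - w‖ :=
    le_antisymm (le_ciInf fun w => hnear w w.2)
      (ciInf_le ⟨0, fun _ ⟨_, h⟩ => h ▸ norm_nonneg _⟩ (⟨p, hp⟩ : K))
  have hobtuse := (norm_eq_iInf_iff_real_inner_le_zero hK hp).1 hinf c hc
  have hsplit : ⟪x - c, x - p⟫ = ‖x - p‖ ^ 2 - ⟪x - p, c - p⟫ := by
    rw [show x - c = (x - p) - (c - p) by abel, inner_sub_left,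
      real_inner_self_eq_norm_sq, real_inner_comm]
  linarith

lemma norm_add_smul_sub_sq_le {x p c : E} {t : ℝ} (ht0 : 0 ≤ t) (ht1 : t ≤ 1)
    (hinner : ‖x - p‖ ^ 2 ≤ ⟪x - c, x - p⟫) :
    ‖x + t • (p - x) - c‖ ^ 2 + t * ‖x - p‖ ^ 2 ≤ ‖x - c‖ ^ 2 := by
  have hexpand : ‖x + t • (p - x) - c‖ ^ 2
      = ‖x - c‖ ^ 2 - 2 * t * ⟪x - c, x - p⟫ + t ^ 2 * ‖x - p‖ ^ 2 := by
    rw [show x + t • (p - x) - c = (x - c) - t • (x - p) by module, norm_sub_sq_real,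
      real_inner_smul_right, norm_smul, Real.norm_eq_abs, abs_of_nonneg ht0]
    ring
  have ht_sq : t ^ 2 ≤ t := by nlinarith
  nlinarith [mul_le_mul_of_nonneg_left hinner ht0,
    mul_le_mul_of_nonneg_right ht_sq (sq_nonneg ‖x - p‖)]

end NearestPoint

theorem dist_decrease_towards_projection_general (n : ℕ)
    (C : Set (EuclideanSpace ℝ (Fin n)))
    (hcomp : IsCompact C) (hconv : Convex ℝ C)
    (x : EuclideanSpace ℝ (Fin n)) (hx : x ∉ C)
    (p : EuclideanSpace ℝ (Fin n)) (hp : p ∈ C)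
    (hnear : ∀ c ∈ C, ‖x - p‖ ≤ ‖x - c‖)
    (t : ℝ) (ht0 : 0 < t) (ht1 : t ≤ 1) :
    ∃ δ : ℝ, 0 < δ ∧ ∀ c ∈ C, ‖(x + t • (p - x)) - c‖ ≤ ‖x - c‖ - δ := by
  obtain ⟨M, hM0, hM⟩ := (hcomp.image (continuous_sub_left x)).isBounded.exists_pos_norm_le
  rw [Set.forall_mem_image] at hM
  have hxp : 0 < ‖x - p‖ := norm_pos_iff.2 (sub_ne_zero.2 fun h => hx (h ▸ hp))
  refine ⟨t * ‖x - p‖ ^ 2 / (2 * M), by positivity, fun c hc => ?_⟩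
  exact le_sub_div_of_sq_add_le_sq (norm_nonneg _) (by positivity)
    (norm_add_smul_sub_sq_le ht0.le ht1
      (norm_sub_sq_le_inner_of_forall_norm_sub_le hconv hp hnear hc)) (hM hc)

/-- Uniform strict decrease of distances when moving toward the projection: if `C ⊆ ℝⁿ`
is nonempty compact convex, `x ∉ C`, `p` is the nearest point of `C` to `x`, and
`z = x + t • (p - x)` with `0 < t ≤ 1`, then there is `δ > 0` with
`‖z - c‖ ≤ ‖x - c‖ - δ` for every `c ∈ C`. -/
theorem dist_decrease_towards_projection (n : ℕ)
    (C : Set (EuclideanSpace ℝ (Fin n))) (hC : C.Nonempty)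
    (hcomp : IsCompact C) (hconv : Convex ℝ C)
    (x : EuclideanSpace ℝ (Fin n)) (hx : x ∉ C)
    (p : EuclideanSpace ℝ (Fin n)) (hp : p ∈ C)
    (hnear : ∀ c ∈ C, ‖x - p‖ ≤ ‖x - c‖)
    (t : ℝ) (ht0 : 0 < t) (ht1 : t ≤ 1) :
    ∃ δ : ℝ, 0 < δ ∧ ∀ c ∈ C, ‖(x + t • (p - x)) - c‖ ≤ ‖x - c‖ - δ :=
  dist_decrease_towards_projection_general n C hcomp hconv x hx p hp hnear t ht0 ht1
end

section
/- Fenchel duality in sandwich (attainment) form: Let n be a natural number, let D ⊆ ℝⁿ be a nonempty convex set, let f : ℝⁿ → ℝ be convex on D, let g : ℝⁿ → ℝ be continuous and concave on all of ℝⁿ, and let α ∈ ℝ satisfy g(x) + α ≤ f(x) for all x ∈ D. Then there exist u ∈ ℝⁿ and c ∈ ℝ such that g(x) + α ≤ ⟪x, u⟫ − c for all x ∈ ℝⁿ and ⟪x, u⟫ − c ≤ f(x) for all x ∈ D. (Taking α to be the infimum of f − g over D, this yields the duality inf_{x}(f(x) − g(x)) = max_{x*}(g*(x*) − f*(x*)),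 with the maximum attained at u.) -/
open scoped RealInnerProductSpace

/-! The strict hypograph of `g + α` is open and convex and misses the epigraph of `f` over `D`,
so Hahn–Banach separates them by a closed hyperplane `φ = u` in `ℝⁿ × ℝ`. Comparing a point of
`D` below and above its graph shows that the hyperplane is not vertical, i.e. `φ (0, 1) > 0`;
it is then the graph of an affine function, which lies above `g + α` and below `f`. -/

section

variable {E : Type*} [TopologicalSpace E] [AddCommGroup E] [Module ℝ E]

theorem ContinuousLinearMap.apply_prod_eq_add_mul (φ : E × ℝ →L[ℝ] ℝ) (x : E) (t : ℝ) :
    φ (x, t) = φ (x, 0) + t * φ (0, 1) := by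
  have hxt : (x, t) = (x, (0 : ℝ)) + t • ((0 : E), (1 : ℝ)) := by simp
  rw [hxt, map_add, map_smul, smul_eq_mul]

theorem ContinuousLinearMap.apply_zero_one_pos {φ : E × ℝ →L[ℝ] ℝ} {x : E} {s t : ℝ}
    (h : φ (x, s) < φ (x, t)) (hst : s ≤ t) : 0 < φ (0, 1) := by
  rw [φ.apply_prod_eq_add_mul x s, φ.apply_prod_eq_add_mul x t] at h
  exact pos_of_mul_pos_right (by linarith : 0 < (t - s) * φ (0, 1)) (sub_nonneg.2 hst)

variable [IsTopologicalAddGroup E] [ContinuousSMul ℝ E]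

theorem exists_strictHypograph_lt_le_epigraph {D : Set E} {f g : E → ℝ} (hf : ConvexOn ℝ D f)
    (hg : ConcaveOn ℝ Set.univ g) (hgc : Continuous g) (hgf : ∀ x ∈ D, g x ≤ f x) :
    ∃ (φ : E × ℝ →L[ℝ] ℝ) (u : ℝ),
      (∀ x t, t < g x → φ (x, t) < u) ∧ ∀ x ∈ D, u ≤ φ (x, f x) := by
  have hopen : IsOpen {p : E × ℝ | p.1 ∈ Set.univ ∧ p.2 < g p.1} := by
    simpa using isOpen_lt continuous_snd (hgc.comp continuous_fst)
  have hdisj : Disjoint {p : E × ℝ | p.1 ∈ Set.univ ∧ p.2 < g p.1}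
      {p | p.1 ∈ D ∧ f p.1 ≤ p.2} :=
    Set.disjoint_left.2 fun _ ⟨_, hlt⟩ ⟨hD, hle⟩ => ((hgf _ hD).trans hle).not_gt hlt
  obtain ⟨φ, u, hlt, hle⟩ :=
    geometric_hahn_banach_open hg.convex_strict_hypograph hopen hf.convex_epigraph hdisj
  exact ⟨φ, u, fun x t ht => hlt (x, t) ⟨trivial, ht⟩, fun x hx => hle (x, f x) ⟨hx, le_rfl⟩⟩

theorem exists_continuousLinearMap_add_const_between {D : Set E} (hD : D.Nonempty)
    {f g : E → ℝ} (hf : ConvexOn ℝ D f) (hg : ConcaveOn ℝ Set.univ g) (hgc : Continuous g)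
    (hgf : ∀ x ∈ D, g x ≤ f x) :
    ∃ (ℓ : E →L[ℝ] ℝ) (c : ℝ), (∀ x, g x ≤ ℓ x + c) ∧ ∀ x ∈ D, ℓ x + c ≤ f x := by
  obtain ⟨φ, u, hlt, hle⟩ := exists_strictHypograph_lt_le_epigraph hf hg hgc hgf
  obtain ⟨x₀, hx₀⟩ := hD
  have hβ : 0 < φ (0, 1) := ContinuousLinearMap.apply_zero_one_pos
    ((hlt x₀ _ (sub_one_lt (g x₀))).trans_le (hle x₀ hx₀)) (by linarith [hgf x₀ hx₀])
  set ℓ : E →L[ℝ] ℝ := -(φ (0, 1))⁻¹ • φ.comp (.inl ℝ E ℝ)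
  set c := u / φ (0, 1)
  have hφ : ∀ x t, φ (x, t) = φ (0, 1) * (t - (ℓ x + c)) + u := by
    intro x t
    simp only [ℓ, c, FunLike.coe_smul, Pi.smul_apply,
      ContinuousLinearMap.comp_apply, ContinuousLinearMap.inl_apply, smul_eq_mul]
    rw [φ.apply_prod_eq_add_mul]
    field_simp
    ring
  refine ⟨ℓ, c, fun x => le_of_forall_lt fun t ht => ?_, fun x hx => ?_⟩
  · have h := hlt x t ht
    rw [hφ] at h
    exact sub_neg.1 (neg_of_mul_neg_right (by linarith) hβ.le)
  · have h := hle x hx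
    rw [hφ] at h
    exact sub_nonneg.1 (nonneg_of_mul_nonneg_right (by linarith) hβ)

end

/-- Fenchel duality in sandwich form: if `f` is convex on a nonempty convex set `D ⊆ ℝⁿ`,
`g : ℝⁿ → ℝ` is continuous and concave, and `g x + α ≤ f x` on `D`, then there is an
affine function `x ↦ ⟪x, u⟫ - c` sandwiched between `g + α` (on all of `ℝⁿ`) and `f`
(on `D`). -/
theorem fenchel_duality_sandwich (n : ℕ)
    (D : Set (EuclideanSpace ℝ (Fin n))) (hD : D.Nonempty)
    (f : EuclideanSpace ℝ (Fin n) → ℝ) (hf : ConvexOn ℝ D f)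
    (g : EuclideanSpace ℝ (Fin n) → ℝ) (hgcont : Continuous g)
    (hgconc : ConcaveOn ℝ Set.univ g)
    (α : ℝ) (hα : ∀ x ∈ D, g x + α ≤ f x) :
    ∃ (u : EuclideanSpace ℝ (Fin n)) (c : ℝ),
      (∀ x : EuclideanSpace ℝ (Fin n), g x + α ≤ ⟪x, u⟫ - c) ∧
      (∀ x ∈ D, ⟪x, u⟫ - c ≤ f x) := by
  obtain ⟨ℓ, c, hgℓ, hℓf⟩ := exists_continuousLinearMap_add_const_between hD hf
    (hgconc.add_const α) (hgcont.add continuous_const) hα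
  have hinner : ∀ x, ⟪x, (InnerProductSpace.toDual ℝ _).symm ℓ⟫ = ℓ x := fun x => by
    rw [real_inner_comm, InnerProductSpace.toDual_symm_apply]
  refine ⟨(InnerProductSpace.toDual ℝ _).symm ℓ, -c, fun x => ?_, fun x hx => ?_⟩
  · simpa [hinner] using hgℓ x
  · simpa [hinner] using hℓf x hx
end

section
/- Minty's surjectivity theorem (resolvent of a maximal monotone relation is everywhere defined): Let n be a natural number and let T ⊆ ℝⁿ × ℝⁿ be a maximal monotone relation, i.e. T is monotone and every pair (x, x*) ∈ ℝⁿ × ℝⁿ satisfying ⟪x − y, x* − y*⟫ ≥ 0 for all (y, y*) ∈ T already belongs to T. Then for every z ∈ ℝⁿ there exists (x, x*) ∈ T with x + x* = z; that is, the resolvent (T + id)⁻¹ is a (firmly nonexpansive) map defined on all of ℝⁿ. -/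
/-!
For a pair `(a, b)`, the set of `x` with `⟪x - a, x + b⟫ ≤ 0` is the closed ball with centre
`(a - b) / 2` and radius `‖a + b‖ / 2`. A point `x` lying in the balls of all pairs of `T` shifted
by `(0, z)` gives `(x, z - x) ∈ T` by maximality, and by compactness of balls it suffices to meet
finitely many of them. For finitely many monotone pairs, minimise the maximum `f` of the quadratics
`x ↦ ⟪x - a, x + b⟫`. At a minimiser `0` is a convex combination of the gradients of the active
quadratics (otherwise a separating direction would be a descent direction), so `x = (u - v) / 2`
for the correspondingly averaged pair `(u, v)`. Monotonicity bounds `⟪u, v⟫` by the average of the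
`⟪a, b⟫`, whence `f x ≤ ⟪x - u, x + v⟫ = -‖u + v‖² / 4 ≤ 0`.
-/

open scoped RealInnerProductSpace
open Filter Topology

variable {E : Type*} [NormedAddCommGroup E] [InnerProductSpace ℝ E]

def IsMonotoneRelation (M : Set (E × E)) : Prop :=
  ∀ p ∈ M, ∀ q ∈ M, 0 ≤ ⟪p.1 - q.1, p.2 - q.2⟫

theorem IsMonotoneRelation.mono {M N : Set (E × E)} (hM : IsMonotoneRelation M) (hNM : N ⊆ M) :
    IsMonotoneRelation N :=
  fun p hp q hq => hM p (hNM hp) q (hNM hq)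

theorem IsMonotoneRelation.inner_sum_le {s : Finset (E × E)}
    (hs : IsMonotoneRelation (s : Set (E × E))) {w : E × E → ℝ} (hw₀ : ∀ p ∈ s, 0 ≤ w p)
    (hw₁ : ∑ p ∈ s, w p = 1) :
    ⟪∑ p ∈ s, w p • p.1, ∑ p ∈ s, w p • p.2⟫ ≤ ∑ p ∈ s, w p * ⟪p.1, p.2⟫ := by
  have hvar : ∑ p ∈ s, ∑ q ∈ s, w p * w q * ⟪p.1 - q.1, p.2 - q.2⟫ =
      2 * (∑ p ∈ s, w p * ⟪p.1, p.2⟫ - ⟪∑ p ∈ s, w p • p.1, ∑ p ∈ s, w p • p.2⟫) := by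
    simp only [inner_sub_left, inner_sub_right, mul_sub, Finset.sum_sub_distrib, sum_inner,
      inner_sum, real_inner_smul_left, real_inner_smul_right]
    have hdiag : ∀ f : E × E → ℝ, ∑ p ∈ s, ∑ q ∈ s, w p * w q * f p = ∑ p ∈ s, w p * f p :=
      fun f => Finset.sum_congr rfl fun p _ => by
        rw [← Finset.sum_mul, ← Finset.mul_sum, hw₁, mul_one]
    have hdiag' : ∀ f : E × E → ℝ, ∑ p ∈ s, ∑ q ∈ s, w p * w q * f q = ∑ p ∈ s, w p * f p := by
      intro f
      rw [Finset.sum_comm]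
      simp_rw [mul_comm (w _) (w _)]
      exact hdiag f
    have hcross : ∑ p ∈ s, ∑ q ∈ s, w p * w q * ⟪p.1, q.2⟫ =
        ∑ p ∈ s, ∑ q ∈ s, w p * w q * ⟪q.1, p.2⟫ := by
      rw [Finset.sum_comm]
      simp_rw [mul_comm (w _) (w _)]
    simp_rw [← mul_assoc]
    rw [hdiag (fun p => ⟪p.1, p.2⟫), hdiag' (fun p => ⟪p.1, p.2⟫), hcross]
    ring
  have hnonneg : 0 ≤ ∑ p ∈ s, ∑ q ∈ s, w p * w q * ⟪p.1 - q.1, p.2 - q.2⟫ :=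
    Finset.sum_nonneg fun p hp => Finset.sum_nonneg fun q hq =>
      mul_nonneg (mul_nonneg (hw₀ p hp) (hw₀ q hq)) (hs p hp q hq)
  linarith

theorem IsMonotoneRelation.sum_mul_inner_sub_add_le {s : Finset (E × E)}
    (hs : IsMonotoneRelation (s : Set (E × E))) {w : E × E → ℝ} (hw₀ : ∀ p ∈ s, 0 ≤ w p)
    (hw₁ : ∑ p ∈ s, w p = 1) (x : E) :
    ∑ p ∈ s, w p * ⟪x - p.1, x + p.2⟫ ≤
      ⟪x - ∑ p ∈ s, w p • p.1, x + ∑ p ∈ s, w p • p.2⟫ := by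
  set u := ∑ p ∈ s, w p • p.1
  set v := ∑ p ∈ s, w p • p.2
  calc ∑ p ∈ s, w p * ⟪x - p.1, x + p.2⟫
      = ⟪x, x⟫ + ⟪x, v⟫ - ⟪u, x⟫ - ∑ p ∈ s, w p * ⟪p.1, p.2⟫ := by
        simp only [u, v, inner_sum, sum_inner, real_inner_smul_left, real_inner_smul_right,
          inner_sub_left, inner_add_right, mul_add, mul_sub, Finset.sum_add_distrib,
          Finset.sum_sub_distrib, ← Finset.sum_mul, hw₁, one_mul]
        ring
    _ ≤ ⟪x, x⟫ + ⟪x, v⟫ - ⟪u, x⟫ - ⟪u, v⟫ := by linarith [hs.inner_sum_le hw₀ hw₁]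
    _ = ⟪x - u, x + v⟫ := by rw [inner_sub_left, inner_add_right, inner_add_right]; ring

theorem inner_sub_add_eq_dist_sq_sub_sq (x a b : E) :
    ⟪x - a, x + b⟫ = dist x ((2:ℝ)⁻¹ • (a - b)) ^ 2 - (‖a + b‖ / 2) ^ 2 := by
  rw [dist_eq_norm, div_pow, ← real_inner_self_eq_norm_sq, ← real_inner_self_eq_norm_sq]
  simp only [inner_sub_left, inner_sub_right, inner_add_left, inner_add_right,
    real_inner_smul_left, real_inner_smul_right]
  rw [real_inner_comm a x, real_inner_comm b x, real_inner_comm b a]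
  ring

theorem inner_sub_add_nonpos_iff (x a b : E) :
    ⟪x - a, x + b⟫ ≤ 0 ↔ x ∈ Metric.closedBall ((2:ℝ)⁻¹ • (a - b)) (‖a + b‖ / 2) := by
  rw [inner_sub_add_eq_dist_sq_sub_sq, sub_nonpos, Metric.mem_closedBall,
    sq_le_sq₀ dist_nonneg (by positivity)]

theorem tendsto_inner_sub_add_cocompact [ProperSpace E] (a b : E) :
    Tendsto (fun x => ⟪x - a, x + b⟫) (cocompact E) atTop := by
  simp_rw [inner_sub_add_eq_dist_sq_sub_sq]
  exact tendsto_atTop_add_const_right _ _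
    ((tendsto_pow_atTop two_ne_zero).comp (tendsto_dist_right_cocompact_atTop _))

theorem hasGradientAt_inner_sub_add [CompleteSpace E] (a b x : E) :
    HasGradientAt (fun y => ⟪y - a, y + b⟫) ((2:ℝ) • x + b - a) x := by
  rw [hasGradientAt_iff_hasFDerivAt]
  refine ((hasFDerivAt_id x).sub_const a).inner ℝ ((hasFDerivAt_id x).add_const b)
    |>.congr_fderiv ?_
  ext y
  simp only [ContinuousLinearMap.comp_apply, ContinuousLinearMap.prod_apply, fderivInnerCLM_apply,
    ContinuousLinearMap.id_apply, InnerProductSpace.toDual_apply_apply, id, inner_add_left,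
    inner_sub_left, inner_add_right, two_smul]
  rw [real_inner_comm x y, real_inner_comm b y]
  ring

theorem HasDerivAt.eventually_nhdsGT_lt {f : ℝ → ℝ} {f' a : ℝ} (hf : HasDerivAt f f' a)
    (hf' : f' < 0) : ∀ᶠ t in 𝓝[>] a, f t < f a := by
  filter_upwards [nhdsGT_le_nhdsNE a ((hasDerivAt_iff_tendsto_slope.mp hf).eventually
    (eventually_lt_nhds hf')), self_mem_nhdsWithin] with t hslope hat
  exact (slope_neg_iff_of_le hat.le).mp hslope

theorem zero_mem_convexHull_of_isLocalMin_sup' [CompleteSpace E] {ι : Type*} {s : Finset ι}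
    (hs : s.Nonempty) {g : ι → E → ℝ} {g' : ι → E} {x : E}
    (hg : ∀ i ∈ s, HasGradientAt (g i) (g' i) x)
    (hmin : IsLocalMin (fun y => s.sup' hs (g · y)) x) :
    (0 : E) ∈ convexHull ℝ (g' '' {i ∈ s | g i x = s.sup' hs (g · x)}) := by
  set m := s.sup' hs (g · x)
  by_contra h0
  have hfin : (g' '' {i ∈ s | g i x = m}).Finite :=
    (s.finite_toSet.subset fun _ hi => hi.1).image g'
  obtain ⟨φ, u, hφ0, hφ⟩ := geometric_hahn_banach_point_closed (convex_convexHull ℝ _)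
    (hfin.isCompact_convexHull (𝕜 := ℝ)).isClosed h0
  rw [map_zero] at hφ0
  set v := (InnerProductSpace.toDual ℝ E).symm φ
  have hpath : ∀ t : ℝ, HasDerivAt (fun t : ℝ => x - t • v) (-v) t := fun t => by
    simpa using ((hasDerivAt_id t).smul_const v).const_sub x
  have hdesc : ∀ i ∈ s, ∀ᶠ t in 𝓝[>] (0:ℝ), g i (x - t • v) < m := by
    intro i hi
    rcases (s.le_sup' (g · x) hi).lt_or_eq with hlt | heq
    · have hcont : ContinuousAt (fun t : ℝ => g i (x - t • v)) 0 :=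
        (hg i hi).continuousAt.comp_of_eq (hpath 0).continuousAt (by simp)
      exact nhdsWithin_le_nhds (hcont.eventually_lt continuousAt_const (by simpa using hlt))
    · have hderiv : HasDerivAt (fun t : ℝ => g i (x - t • v)) (-φ (g' i)) 0 := by
        refine ((hg i hi).hasFDerivAt.comp_hasDerivAt_of_eq 0 (hpath 0) (by simp)).congr_deriv ?_
        rw [InnerProductSpace.toDual_apply_apply, inner_neg_right, real_inner_comm,
          InnerProductSpace.toDual_symm_apply]
      have hneg : -φ (g' i) < 0 := by
        linarith [hφ _ (subset_convexHull ℝ _ ⟨i, ⟨hi, heq⟩, rfl⟩)]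
      simpa [heq] using hderiv.eventually_nhdsGT_lt hneg
  have hto : Tendsto (fun t : ℝ => x - t • v) (𝓝[>] 0) (𝓝 x) := by
    simpa using (hpath 0).continuousAt.tendsto.mono_left nhdsWithin_le_nhds
  have hback : ∀ᶠ t in 𝓝[>] (0:ℝ), m ≤ s.sup' hs (g · (x - t • v)) := hto.eventually hmin
  obtain ⟨t, hlt, hle⟩ := (((Finset.eventually_all s).2 hdesc).and hback).exists
  exact hle.not_gt ((Finset.sup'_lt_iff hs).2 hlt)

theorem IsMonotoneRelation.sup'_inner_sub_add_nonpos_of_isLocalMin [CompleteSpace E]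
    {s : Finset (E × E)} (hs : IsMonotoneRelation (s : Set (E × E))) (hne : s.Nonempty) {x : E}
    (hx : IsLocalMin (fun y => s.sup' hne fun p => ⟪y - p.1, y + p.2⟫) x) :
    s.sup' hne (fun p => ⟪x - p.1, x + p.2⟫) ≤ 0 := by
  set A := s.filter fun p => ⟪x - p.1, x + p.2⟫ = s.sup' hne fun p => ⟪x - p.1, x + p.2⟫
  -- `G p` is the gradient at `x` of the quadratic of `p`; being affine, it commutes with hulls.
  let G : E × E →ᵃ[ℝ] E := (LinearMap.snd ℝ E E - LinearMap.fst ℝ E E).toAffineMap +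
    AffineMap.const ℝ (E × E) ((2:ℝ) • x)
  have hG : ⇑G = fun p => (2:ℝ) • x + p.2 - p.1 := by
    ext p
    simp [G]
    abel
  have hgrad : (0:E) ∈ G '' convexHull ℝ (A : Set (E × E)) := by
    rw [G.image_convexHull, hG]
    simpa [A] using zero_mem_convexHull_of_isLocalMin_sup' hne
      (fun (p : E × E) _ => hasGradientAt_inner_sub_add p.1 p.2 x) hx
  obtain ⟨_, hq, hq0⟩ := hgrad
  obtain ⟨w, hw₀, hw₁, rfl⟩ := Finset.mem_convexHull'.1 hq
  set u := ∑ p ∈ A, w p • p.1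
  set v := ∑ p ∈ A, w p • p.2
  have hxuv : x = (2:ℝ)⁻¹ • (u - v) := by
    simp only [hG, Prod.fst_sum, Prod.snd_sum, Prod.smul_fst, Prod.smul_snd] at hq0
    linear_combination (norm := module) (2⁻¹ : ℝ) • hq0
  calc s.sup' hne (fun p => ⟪x - p.1, x + p.2⟫)
      = ∑ p ∈ A, w p * ⟪x - p.1, x + p.2⟫ := by
        rw [Finset.sum_congr rfl fun p hp => by rw [(Finset.mem_filter.1 hp).2], ← Finset.sum_mul,
          hw₁, one_mul]
    _ ≤ ⟪x - u, x + v⟫ :=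
        (hs.mono (Finset.coe_subset.2 (Finset.filter_subset _ _))).sum_mul_inner_sub_add_le
          hw₀ hw₁ x
    _ = -(‖u + v‖ / 2) ^ 2 := by rw [inner_sub_add_eq_dist_sq_sub_sq, ← hxuv, dist_self]; ring
    _ ≤ 0 := neg_nonpos.2 (sq_nonneg _)

theorem IsMonotoneRelation.exists_forall_inner_sub_add_nonpos_of_finset [FiniteDimensional ℝ E]
    {s : Finset (E × E)} (hs : IsMonotoneRelation (s : Set (E × E))) :
    ∃ x : E, ∀ p ∈ s, ⟪x - p.1, x + p.2⟫ ≤ 0 := by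
  rcases s.eq_empty_or_nonempty with rfl | hne
  · exact ⟨0, by simp⟩
  set f : E → ℝ := fun y => s.sup' hne fun p => ⟪y - p.1, y + p.2⟫
  obtain ⟨p₀, hp₀⟩ := hne
  have hf : Continuous f := Continuous.finset_sup'_apply _ fun p _ => by fun_prop
  have hf_lim : Tendsto f (cocompact E) atTop :=
    tendsto_atTop_mono (fun y => s.le_sup' (fun p => ⟪y - p.1, y + p.2⟫) hp₀)
      (tendsto_inner_sub_add_cocompact p₀.1 p₀.2)
  obtain ⟨x, hx⟩ := hf.exists_forall_le hf_lim
  exact ⟨x, fun p hp => (s.le_sup' (fun p => ⟪x - p.1, x + p.2⟫) hp).trans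
    (hs.sup'_inner_sub_add_nonpos_of_isLocalMin _ (Eventually.of_forall hx))⟩

theorem IsMonotoneRelation.exists_forall_inner_sub_add_nonpos [FiniteDimensional ℝ E]
    {M : Set (E × E)} (hM : IsMonotoneRelation M) : ∃ x : E, ∀ p ∈ M, ⟪x - p.1, x + p.2⟫ ≤ 0 := by
  classical
  rcases M.eq_empty_or_nonempty with rfl | ⟨p₀, hp₀⟩
  · exact ⟨0, by simp⟩
  let C : M → Set E := fun p =>
    Metric.closedBall ((2:ℝ)⁻¹ • (p.1.1 - p.1.2)) (‖p.1.1 + p.1.2‖ / 2)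
  suffices (C ⟨p₀, hp₀⟩ ∩ ⋂ p, C p).Nonempty by
    obtain ⟨x, -, hx⟩ := this
    exact ⟨x, fun p hp => (inner_sub_add_nonpos_iff _ _ _).2 (Set.mem_iInter.1 hx ⟨p, hp⟩)⟩
  refine (isCompact_closedBall _ _).inter_iInter_nonempty C (fun _ => Metric.isClosed_closedBall)
    fun t => ?_
  have hsub : ↑(insert p₀ (t.map (Function.Embedding.subtype (· ∈ M)))) ⊆ M := by
    intro p hp
    simp only [Finset.coe_insert, Finset.coe_map, Function.Embedding.coe_subtype,
      Set.mem_insert_iff, Set.mem_image] at hp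
    rcases hp with rfl | ⟨q, -, rfl⟩
    exacts [hp₀, q.2]
  obtain ⟨x, hx⟩ := (hM.mono hsub).exists_forall_inner_sub_add_nonpos_of_finset
  exact ⟨x, (inner_sub_add_nonpos_iff _ _ _).1 (hx _ (Finset.mem_insert_self _ _)),
    Set.mem_iInter₂.2 fun p hp => (inner_sub_add_nonpos_iff _ _ _).1
      (hx _ (Finset.mem_insert_of_mem (Finset.mem_map_of_mem _ hp)))⟩

/-- Minty's surjectivity theorem: if `T ⊆ ℝⁿ × ℝⁿ` is a maximal monotone relation, then
for every `z ∈ ℝⁿ` there is `(x, x*) ∈ T` with `x + x* = z`; i.e. the resolvent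
`(T + id)⁻¹` is defined on all of `ℝⁿ`. -/
theorem minty_surjectivity (n : ℕ)
    (T : Set (EuclideanSpace ℝ (Fin n) × EuclideanSpace ℝ (Fin n)))
    (hmono : ∀ p ∈ T, ∀ q ∈ T, (0:ℝ) ≤ ⟪p.1 - q.1, p.2 - q.2⟫)
    (hmax : ∀ x xs : EuclideanSpace ℝ (Fin n),
      (∀ q ∈ T, (0:ℝ) ≤ ⟪x - q.1, xs - q.2⟫) → (x, xs) ∈ T) :
    ∀ z : EuclideanSpace ℝ (Fin n), ∃ p ∈ T, p.1 + p.2 = z := by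
  intro z
  have hshift : IsMonotoneRelation ((fun p => (p.1, p.2 - z)) '' T) := by
    rintro _ ⟨p, hp, rfl⟩ _ ⟨q, hq, rfl⟩
    simpa using hmono p hp q hq
  obtain ⟨x, hx⟩ := hshift.exists_forall_inner_sub_add_nonpos
  refine ⟨(x, z - x), hmax x (z - x) fun q hq => ?_, add_sub_cancel x z⟩
  have hflip : z - x - q.2 = -(x + (q.2 - z)) := by abel
  rw [hflip, inner_neg_right]
  exact neg_nonneg.2 (hx _ ⟨q, hq, rfl⟩)
end

section
/- Characterization of uniformly continuous functions extendable to the whole space: Let m be a natural number, let A be a nonempty closed subset of ℝᵐ, and let f : A → ℝ be uniformly continuous on A. Then the following are equivalent: (1) f extends to a uniformly continuous function F : ℝᵐ → ℝ; (2) f has a subadditive modulus of continuity ω : [0, ∞) → [0, ∞) (ω(s+t) ≤ ω(s) + ω(t) for s, t ≥ 0, and |f(x) − f(y)| ≤ ω(‖x − y‖) on A) with ω(t) → 0 as t → 0⁺; (3) f has an affine modulus of continuity, i.e. there are reals a, b such that |f(x) − f(y)| ≤ a + b·‖x − y‖ for all x, y ∈ A; (4) f has a concave modulus of continuity ω : [0,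 ∞) → [0, ∞) with ω(t) → 0 as t → 0⁺. -/
/-!
A uniformly continuous function on a normed space varies by at most `1` over steps of some
length `d`, hence by at most `1 + ‖x - y‖ / d` between `x` and `y`; subadditivity gives the same
affine bound for a modulus. Conversely, an affine bound and uniform continuity on `A` yield, for
every `ε > 0`, a bound `ε + c_ε t`; the infimum of these affine functions is a concave modulus
vanishing at `0⁺`. A nonnegative concave modulus is nondecreasing and subadditive, so the
McShane-type formula `F x = ⨅ y ∈ A, f y + ω ‖x - y‖` extends `f` with the same modulus.
-/

open Filter Set Topology

section ConcaveModulus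

variable {ω : ℝ → ℝ}

theorem ConcaveOn.monotoneOn_of_nonneg (hω : ConcaveOn ℝ (Ici 0) ω)
    (hnn : ∀ t, 0 ≤ t → 0 ≤ ω t) : MonotoneOn ω (Ici 0) := by
  intro s hs t ht hst
  -- `t = l s + (1 - l) u` with `u ≥ t`, so concavity and `0 ≤ ω u` give `l ω s ≤ ω t`; let `l → 1`.
  have key : ∀ l ∈ Ioo (0 : ℝ) 1, l * ω s ≤ ω t := by
    rintro l ⟨hl0, hl1⟩
    set u := (t - l * s) / (1 - l)
    have hu : 0 ≤ u := div_nonneg (by nlinarith [mem_Ici.1 hs]) (by linarith)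
    have hcomb : l • s + (1 - l) • u = t := by
      simp only [smul_eq_mul, u]; field_simp; ring
    have := hω.2 hs hu hl0.le (sub_nonneg.2 hl1.le) (add_sub_cancel l 1)
    rw [hcomb, smul_eq_mul, smul_eq_mul] at this
    nlinarith [hnn u hu]
  have hlim : Tendsto (fun l => l * ω s) (𝓝[<] 1) (𝓝 (ω s)) := by
    simpa using ((continuous_mul_const (ω s)).tendsto 1).mono_left nhdsWithin_le_nhds
  exact le_of_tendsto hlim (eventually_of_mem (Ioo_mem_nhdsLT one_pos) key)

theorem ConcaveOn.mul_le_map_mul (hω : ConcaveOn ℝ (Ici 0) ω) (h0 : 0 ≤ ω 0) {a x : ℝ}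
    (ha0 : 0 ≤ a) (ha1 : a ≤ 1) (hx : 0 ≤ x) : a * ω x ≤ ω (a * x) := by
  have := hω.2 (mem_Ici.2 hx) self_mem_Ici ha0 (sub_nonneg.2 ha1) (add_sub_cancel a 1)
  simp only [smul_eq_mul, mul_zero, add_zero] at this
  nlinarith

theorem ConcaveOn.map_add_le (hω : ConcaveOn ℝ (Ici 0) ω) (h0 : 0 ≤ ω 0) {s t : ℝ}
    (hs : 0 ≤ s) (ht : 0 ≤ t) : ω (s + t) ≤ ω s + ω t := by
  rcases (add_nonneg hs ht).eq_or_lt with hst | hst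
  · obtain ⟨rfl, rfl⟩ : s = 0 ∧ t = 0 := ⟨by linarith, by linarith⟩
    simpa using h0
  have h1 := hω.mul_le_map_mul h0 (div_nonneg hs hst.le)
    ((div_le_one hst).2 (by linarith)) hst.le
  have h2 := hω.mul_le_map_mul h0 (div_nonneg ht hst.le)
    ((div_le_one hst).2 (by linarith)) hst.le
  rw [div_mul_cancel₀ _ hst.ne'] at h1 h2
  have : s / (s + t) * ω (s + t) + t / (s + t) * ω (s + t) = ω (s + t) := by
    field_simp
  linarith

theorem MonotoneOn.eq_zero_of_tendsto_nhdsGT (hmono : MonotoneOn ω (Ici 0)) (h0 : 0 ≤ ω 0)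
    (hω : Tendsto ω (𝓝[>] 0) (𝓝 0)) : ω 0 = 0 :=
  le_antisymm (ge_of_tendsto hω (eventually_nhdsWithin_of_forall fun _ (ht : 0 < _) =>
    hmono self_mem_Ici ht.le ht.le)) h0

end ConcaveModulus

section Extension

variable {α : Type*} [PseudoMetricSpace α] {ω : ℝ → ℝ}

theorem map_dist_le_add_of_subadditive (hmono : MonotoneOn ω (Ici 0))
    (hsub : ∀ s t, 0 ≤ s → 0 ≤ t → ω (s + t) ≤ ω s + ω t) (x y z : α) :
    ω (dist x z) ≤ ω (dist x y) + ω (dist y z) :=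
  (hmono (dist_nonneg (x := x) (y := z)) (add_nonneg dist_nonneg dist_nonneg)
    (dist_triangle x y z)).trans (hsub _ _ dist_nonneg dist_nonneg)

theorem exists_extension_abs_sub_le {A : Set α} (hA : A.Nonempty) {f : α → ℝ}
    (hmono : MonotoneOn ω (Ici 0)) (hsub : ∀ s t, 0 ≤ s → 0 ≤ t → ω (s + t) ≤ ω s + ω t)
    (h0 : ω 0 = 0) (hf : ∀ x ∈ A, ∀ y ∈ A, |f x - f y| ≤ ω (dist x y)) :
    ∃ F : α → ℝ, (∀ x y, |F x - F y| ≤ ω (dist x y)) ∧ ∀ x ∈ A, F x = f x := by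
  obtain ⟨x₀, hx₀⟩ := hA
  have : Nonempty A := ⟨⟨x₀, hx₀⟩⟩
  have htri := map_dist_le_add_of_subadditive (α := α) hmono hsub
  have hbdd : ∀ x : α, BddBelow (range fun y : A => f y + ω (dist x y)) := by
    refine fun x => ⟨f x₀ - ω (dist x₀ x), ?_⟩
    rintro _ ⟨y, rfl⟩
    linarith [(abs_le.1 (hf x₀ hx₀ y y.2)).2, htri x₀ x y]
  let F (x : α) := ⨅ y : A, f y + ω (dist x y)
  have hF : ∀ x x' : α, F x - ω (dist x x') ≤ F x' := fun x x' =>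
    le_ciInf fun y => by linarith [ciInf_le (hbdd x) y, htri x x' y]
  refine ⟨F, fun x x' => abs_sub_le_iff.2 ⟨?_, ?_⟩, fun x hx => le_antisymm ?_ ?_⟩
  · linarith [hF x x']
  · linarith [hF x' x, congrArg ω (dist_comm x x')]
  · simpa [h0] using ciInf_le (hbdd x) ⟨x, hx⟩
  · exact le_ciInf fun y => by linarith [(abs_le.1 (hf x hx y y.2)).2]

theorem uniformContinuous_of_abs_sub_le {F : α → ℝ} (hF : ∀ x y, |F x - F y| ≤ ω (dist x y))
    (h0 : ω 0 = 0) (hω : Tendsto ω (𝓝[>] 0) (𝓝 0)) : UniformContinuous F := by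
  rw [Metric.uniformContinuous_iff]
  intro ε hε
  obtain ⟨δ, hδ, hωδ⟩ := Metric.tendsto_nhdsWithin_nhds.1 hω ε hε
  refine ⟨δ, hδ, fun {x y} hxy => (Real.dist_eq _ _).trans_lt ?_⟩
  rcases (dist_nonneg (x := x) (y := y)).eq_or_lt with hd | hd
  · exact (hF x y).trans_lt (by rwa [← hd, h0])
  · have := hωδ hd (by rwa [Real.dist_eq, sub_zero, abs_of_pos hd])
    rw [Real.dist_eq, sub_zero] at this
    exact (hF x y).trans_lt ((le_abs_self _).trans_lt this)

end Extension

section AffineBound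

variable {E : Type*} [NormedAddCommGroup E] [NormedSpace ℝ E]

theorem abs_sub_le_nat_of_norm_sub_le
    {F : E → ℝ} {d : ℝ} (hF : ∀ x y, ‖x - y‖ ≤ d → |F x - F y| ≤ 1) (n : ℕ) {x y : E}
    (hxy : ‖x - y‖ ≤ n * d) : |F x - F y| ≤ n := by
  induction n generalizing x with
  | zero =>
    obtain rfl : x = y := sub_eq_zero.1 (norm_le_zero_iff.1 (by simpa using hxy))
    simp
  | succ n ih =>
    have hn : (0 : ℝ) < n + 1 := by positivity
    set z := y + (n / (n + 1) : ℝ) • (x - y)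
    have hxz : x - z = (1 / (n + 1) : ℝ) • (x - y) := by
      simp only [z]
      rw [show (1 / (n + 1) : ℝ) = 1 - n / (n + 1) by field_simp; ring, sub_smul, one_smul]
      abel
    have hzy : z - y = (n / (n + 1) : ℝ) • (x - y) := add_sub_cancel_left _ _
    push_cast at hxy ⊢
    calc |F x - F y| ≤ |F x - F z| + |F z - F y| := abs_sub_le _ _ _
      _ ≤ 1 + n := by
        gcongr
        · refine hF _ _ ?_
          rw [hxz, norm_smul, Real.norm_of_nonneg (by positivity), one_div_mul_eq_div,
            div_le_iff₀ hn]
          linarith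
        · refine ih ?_
          rw [hzy, norm_smul, Real.norm_of_nonneg (by positivity), div_mul_eq_mul_div,
            div_le_iff₀ hn]
          nlinarith
      _ = n + 1 := add_comm _ _

theorem UniformContinuous.exists_abs_sub_le_one_add_mul_dist {F : E → ℝ}
    (hF : UniformContinuous F) :
    ∃ b, ∀ x y, |F x - F y| ≤ 1 + b * dist x y := by
  obtain ⟨δ, hδ, hFδ⟩ := Metric.uniformContinuous_iff.1 hF 1 one_pos
  have hd : 0 < δ / 2 := half_pos hδ
  have hstep : ∀ x y : E, ‖x - y‖ ≤ δ / 2 → |F x - F y| ≤ 1 := fun x y h =>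
    (hFδ (by rw [dist_eq_norm]; linarith)).le
  refine ⟨(δ / 2)⁻¹, fun x y => ?_⟩
  have hn := abs_sub_le_nat_of_norm_sub_le hstep ⌈‖x - y‖ / (δ / 2)⌉₊
    (by rw [← div_le_iff₀ hd]; exact Nat.le_ceil _)
  have := Nat.ceil_lt_add_one (div_nonneg (norm_nonneg (x - y)) hd.le)
  rw [dist_eq_norm]
  linarith [inv_mul_eq_div (δ / 2) ‖x - y‖]

end AffineBound

theorem exists_le_one_add_mul_of_subadditive {ω : ℝ → ℝ}
    (hsub : ∀ s t, 0 ≤ s → 0 ≤ t → ω (s + t) ≤ ω s + ω t) (hω : Tendsto ω (𝓝[>] 0) (𝓝 0)) :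
    ∃ b, ∀ t > 0, ω t ≤ 1 + b * t := by
  obtain ⟨d, hd : 0 < d, hsmall⟩ :=
    mem_nhdsGT_iff_exists_Ioc_subset.1 (hω.eventually (gt_mem_nhds one_pos))
  have hmul : ∀ n : ℕ, ∀ s, 0 ≤ s → ω ((n + 1) * s) ≤ (n + 1) * ω s := by
    intro n s hs
    induction n with
    | zero => simp
    | succ n ih =>
      push_cast
      calc ω ((n + 1 + 1) * s) = ω ((n + 1) * s + s) := by ring_nf
        _ ≤ ω ((n + 1) * s) + ω s := hsub _ _ (by positivity) hs
        _ ≤ (n + 1 + 1) * ω s := by linarith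
  refine ⟨d⁻¹, fun t ht => ?_⟩
  set n := ⌊t / d⌋₊
  have hs : t / (n + 1) ∈ Ioc 0 d := ⟨by positivity, by
    rw [div_le_iff₀ (by positivity), ← div_le_iff₀' hd]; exact (Nat.lt_floor_add_one _).le⟩
  have hn : (n : ℝ) ≤ d⁻¹ * t := inv_mul_eq_div d t ▸ Nat.floor_le (div_nonneg ht.le hd.le)
  calc ω t = ω ((n + 1) * (t / (n + 1))) := by rw [mul_div_cancel₀ _ (by positivity)]
    _ ≤ (n + 1) * ω (t / (n + 1)) := hmul n _ (le_of_lt hs.1)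
    _ ≤ (n + 1) * 1 := by gcongr; exact (hsmall hs).le
    _ ≤ 1 + d⁻¹ * t := by linarith

theorem concaveOn_ciInf {ι E : Type*} [Nonempty ι] [AddCommMonoid E] [Module ℝ E] {s : Set E}
    {g : ι → E → ℝ} (hg : ∀ i, ConcaveOn ℝ s (g i))
    (hbdd : ∀ x ∈ s, BddBelow (range fun i => g i x)) :
    ConcaveOn ℝ s fun x => ⨅ i, g i x := by
  refine ⟨(hg (Classical.arbitrary ι)).1, fun x hx y hy a b ha hb hab => le_ciInf fun i => ?_⟩
  calc a • (⨅ i, g i x) + b • (⨅ i, g i y) ≤ a • g i x + b • g i y := by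
        gcongr
        · exact ciInf_le (hbdd x hx) i
        · exact ciInf_le (hbdd y hy) i
    _ ≤ g i (a • x + b • y) := (hg i).2 hx hy ha hb hab

section ConcaveModulusOfAffine

variable {α : Type*} [PseudoMetricSpace α] {A : Set α} {f : α → ℝ}

theorem UniformContinuousOn.exists_abs_sub_le_add_mul_dist (hf : UniformContinuousOn f A)
    {a b : ℝ} (hab : ∀ x ∈ A, ∀ y ∈ A, |f x - f y| ≤ a + b * dist x y) {ε : ℝ} (hε : 0 < ε) :
    ∃ c ≥ 0, ∀ x ∈ A, ∀ y ∈ A, |f x - f y| ≤ ε + c * dist x y := by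
  obtain ⟨δ, hδ, hfδ⟩ := Metric.uniformContinuousOn_iff.1 hf ε hε
  refine ⟨max a 0 / δ + max b 0, by positivity, fun x hx y hy => ?_⟩
  have hc : 0 ≤ (max a 0 / δ + max b 0) * dist x y := by positivity
  rcases lt_or_ge (dist x y) δ with hxy | hxy
  · have := hfδ x hx y hy hxy
    rw [Real.dist_eq] at this
    linarith
  · have ha : a ≤ max a 0 / δ * dist x y := by
      rw [div_mul_eq_mul_div, le_div_iff₀ hδ]
      nlinarith [le_max_left a 0, le_max_right a 0]
    have hb : b * dist x y ≤ max b 0 * dist x y :=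
      mul_le_mul_of_nonneg_right (le_max_left _ _) dist_nonneg
    linarith [hab x hx y hy]

theorem exists_concaveOn_modulus
    (h : ∀ ε > 0, ∃ c ≥ 0, ∀ x ∈ A, ∀ y ∈ A, |f x - f y| ≤ ε + c * dist x y) :
    ∃ ω : ℝ → ℝ, (∀ t, 0 ≤ t → 0 ≤ ω t) ∧ ConcaveOn ℝ (Ici 0) ω ∧
      (∀ x ∈ A, ∀ y ∈ A, |f x - f y| ≤ ω (dist x y)) ∧ Tendsto ω (𝓝[>] 0) (𝓝 0) := by
  choose c hc0 hc using fun n : ℕ => h (1 / (n + 1)) Nat.one_div_pos_of_nat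
  have hnn : ∀ t ∈ Ici (0 : ℝ), ∀ n : ℕ, 0 ≤ 1 / (n + 1 : ℝ) + c n * t := fun t ht n =>
    add_nonneg (by positivity) (mul_nonneg (hc0 n) ht)
  have hbdd : ∀ t ∈ Ici (0 : ℝ), BddBelow (range fun n : ℕ => 1 / (n + 1 : ℝ) + c n * t) :=
    fun t ht => ⟨0, by rintro _ ⟨n, rfl⟩; exact hnn t ht n⟩
  refine ⟨fun t => ⨅ n : ℕ, (1 / (n + 1 : ℝ) + c n * t), fun t ht => le_ciInf (hnn t ht),
    concaveOn_ciInf (fun n => ?_) hbdd, fun x hx y hy => le_ciInf fun n => hc n x hx y hy, ?_⟩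
  · exact (concaveOn_const _ (convex_Ici 0)).add ((concaveOn_id (convex_Ici 0)).smul (hc0 n))
  · refine tendsto_order.2 ⟨fun a ha => eventually_nhdsWithin_of_forall fun t (ht : 0 < t) =>
      ha.trans_le (le_ciInf (hnn t ht.le)), fun b hb => ?_⟩
    obtain ⟨n, hn⟩ := exists_nat_one_div_lt hb
    have hlin : Tendsto (fun t => 1 / (n + 1 : ℝ) + c n * t) (𝓝[>] 0) (𝓝 (1 / (n + 1))) :=
      ((continuous_const.add (continuous_const_mul (c n))).tendsto' 0 _ (by simp)).mono_left
        nhdsWithin_le_nhds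
    filter_upwards [hlin.eventually (gt_mem_nhds hn), self_mem_nhdsWithin] with t ht ht0
    exact (ciInf_le (hbdd t (Ioi_subset_Ici_self ht0)) n).trans_lt ht

end ConcaveModulusOfAffine

theorem uniformly_continuous_extension_tfae_general (m : ℕ)
    (A : Set (EuclideanSpace ℝ (Fin m))) (hA : A.Nonempty)
    (f : EuclideanSpace ℝ (Fin m) → ℝ) (hf : UniformContinuousOn f A) :
    List.TFAE [
      -- (1) f extends to a uniformly continuous function on ℝᵐ
      ∃ F : EuclideanSpace ℝ (Fin m) → ℝ, UniformContinuous F ∧ ∀ x ∈ A, F x = f x,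
      -- (2) f has a subadditive modulus of continuity vanishing at 0⁺
      ∃ ω : ℝ → ℝ, (∀ t, 0 ≤ t → 0 ≤ ω t) ∧
        (∀ s t : ℝ, 0 ≤ s → 0 ≤ t → ω (s + t) ≤ ω s + ω t) ∧
        (∀ x ∈ A, ∀ y ∈ A, |f x - f y| ≤ ω ‖x - y‖) ∧
        Filter.Tendsto ω (nhdsWithin 0 (Set.Ioi 0)) (nhds 0),
      -- (3) f has an affine modulus of continuity
      ∃ a b : ℝ, ∀ x ∈ A, ∀ y ∈ A, |f x - f y| ≤ a + b * ‖x - y‖,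
      -- (4) f has a concave modulus of continuity vanishing at 0⁺
      ∃ ω : ℝ → ℝ, (∀ t, 0 ≤ t → 0 ≤ ω t) ∧ ConcaveOn ℝ (Set.Ici 0) ω ∧
        (∀ x ∈ A, ∀ y ∈ A, |f x - f y| ≤ ω ‖x - y‖) ∧
        Filter.Tendsto ω (nhdsWithin 0 (Set.Ioi 0)) (nhds 0)
    ] := by
  simp only [← dist_eq_norm]
  tfae_have 1 → 3 := by
    rintro ⟨F, hF, hFA⟩
    obtain ⟨b, hb⟩ := hF.exists_abs_sub_le_one_add_mul_dist
    exact ⟨1, b, fun x hx y hy => by simpa only [hFA x hx, hFA y hy] using hb x y⟩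
  tfae_have 2 → 3 := by
    rintro ⟨ω, -, hsub, hmod, hω⟩
    obtain ⟨b, hb⟩ := exists_le_one_add_mul_of_subadditive hsub hω
    refine ⟨1, b, fun x hx y hy => ?_⟩
    rcases eq_or_ne x y with rfl | hxy
    · simp
    · exact (hmod x hx y hy).trans (hb _ (dist_pos.2 hxy))
  tfae_have 3 → 4 := fun ⟨a, b, hab⟩ =>
    exists_concaveOn_modulus fun _ hε => hf.exists_abs_sub_le_add_mul_dist hab hε
  tfae_have 4 → 2 := fun ⟨ω, hnn, hω, hmod, h0⟩ =>
    ⟨ω, hnn, fun _ _ hs ht => hω.map_add_le (hnn 0 le_rfl) hs ht, hmod, h0⟩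
  tfae_have 4 → 1 := by
    rintro ⟨ω, hnn, hω, hmod, h0⟩
    have hmono := hω.monotoneOn_of_nonneg hnn
    have hω0 := hmono.eq_zero_of_tendsto_nhdsGT (hnn 0 le_rfl) h0
    obtain ⟨F, hF, hFA⟩ := exists_extension_abs_sub_le hA hmono
      (fun _ _ hs ht => hω.map_add_le (hnn 0 le_rfl) hs ht) hω0 hmod
    exact ⟨F, uniformContinuous_of_abs_sub_le hF hω0 h0, hFA⟩
  tfae_finish

/-- Characterization of uniformly continuous functions `f : A → ℝ` (`A ⊆ ℝᵐ` closed,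
nonempty) extendable to a uniformly continuous function on all of `ℝᵐ`: this holds iff
`f` has a subadditive modulus of continuity vanishing at `0⁺`, iff `f` has an affine
modulus of continuity, iff `f` has a concave modulus of continuity vanishing at `0⁺`. -/
theorem uniformly_continuous_extension_tfae (m : ℕ)
    (A : Set (EuclideanSpace ℝ (Fin m))) (hA : A.Nonempty) (hAclosed : IsClosed A)
    (f : EuclideanSpace ℝ (Fin m) → ℝ) (hf : UniformContinuousOn f A) :
    List.TFAE [
      -- (1) f extends to a uniformly continuous function on ℝᵐ
      ∃ F : EuclideanSpace ℝ (Fin m) → ℝ, UniformContinuous F ∧ ∀ x ∈ A, F x = f x,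
      -- (2) f has a subadditive modulus of continuity vanishing at 0⁺
      ∃ ω : ℝ → ℝ, (∀ t, 0 ≤ t → 0 ≤ ω t) ∧
        (∀ s t : ℝ, 0 ≤ s → 0 ≤ t → ω (s + t) ≤ ω s + ω t) ∧
        (∀ x ∈ A, ∀ y ∈ A, |f x - f y| ≤ ω ‖x - y‖) ∧
        Filter.Tendsto ω (nhdsWithin 0 (Set.Ioi 0)) (nhds 0),
      -- (3) f has an affine modulus of continuity
      ∃ a b : ℝ, ∀ x ∈ A, ∀ y ∈ A, |f x - f y| ≤ a + b * ‖x - y‖,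
      -- (4) f has a concave modulus of continuity vanishing at 0⁺
      ∃ ω : ℝ → ℝ, (∀ t, 0 ≤ t → 0 ≤ ω t) ∧ ConcaveOn ℝ (Set.Ici 0) ω ∧
        (∀ x ∈ A, ∀ y ∈ A, |f x - f y| ≤ ω ‖x - y‖) ∧
        Filter.Tendsto ω (nhdsWithin 0 (Set.Ioi 0)) (nhds 0)
    ] :=
  uniformly_continuous_extension_tfae_general m A hA f hf
end
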